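/- arXiv:2112.05316 — 7 statements merged into one kernel-verified Lean document; each statement's English description precedes it below -/
import Mathlib

section
/- For any graph G and any m ∈ ℕ, the number of proper m-colorings of a K_p-gluing G of vertex-disjoint graphs G_1, …, G_n (formed by identifying a chosen p-clique in each G_i) satisfies P(G,m) = (∏_{i=1}^n P(G_i,m)) / (∏_{i=0}^{p-1}(m-i))^{n-1} whenever m ≥ p. -/
open SimpleGraph

/-- An `m`-fold cover of a graph `G`, with lists canonically labeled by `Fin m`. -/
structure DPCover {V : Type} (G : SimpleGraph V) (m : ℕ) where
  H : SimpleGraph (V × Fin m)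
  part_complete : ∀ (v : V) (a b : Fin m), a ≠ b → H.Adj (v, a) (v, b)
  cross : ∀ (u v : V) (a b : Fin m), u ≠ v → H.Adj (u, a) (v, b) → G.Adj u v
  matching_right : ∀ (u v : V) (a b b' : Fin m), u ≠ v →
    H.Adj (u, a) (v, b) → H.Adj (u, a) (v, b') → b = b'
  matching_left : ∀ (u v : V) (a a' b : Fin m), u ≠ v →
    H.Adj (u, a) (v, b) → H.Adj (u, a') (v, b) → a = a'

/-- A cover is full if every matching between lists of adjacent vertices is perfect. -/
def DPCover.IsFull {V : Type} {G : SimpleGraph V} {m : ℕ} (C : DPCover G m) : Prop :=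
  ∀ u v : V, G.Adj u v → ∀ a : Fin m, ∃ b : Fin m, C.H.Adj (u, a) (v, b)

/-- An `H`-coloring: a choice of one list element per vertex forming an independent set. -/
def DPCover.IsColoring {V : Type} {G : SimpleGraph V} {m : ℕ} (C : DPCover G m)
    (c : V → Fin m) : Prop :=
  ∀ u v : V, ¬ C.H.Adj (u, c u) (v, c v)

/-- The number of `H`-colorings of `G` with respect to the cover `C`. -/
noncomputable def dpCount {V : Type} {G : SimpleGraph V} {m : ℕ} (C : DPCover G m) : ℕ :=
  Nat.card {c : V → Fin m // C.IsColoring c}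

/-- `N(P, C)`: the number of `H`-colorings containing the set `P` of cover vertices. -/
noncomputable def NCount {V : Type} {G : SimpleGraph V} {m : ℕ} (C : DPCover G m)
    (P : Set (V × Fin m)) : ℕ :=
  Nat.card {c : V → Fin m // C.IsColoring c ∧ ∀ p ∈ P, c p.1 = p.2}

/-- The DP color function: minimum number of colorings over all `m`-fold covers. -/
noncomputable def PDP {V : Type} (G : SimpleGraph V) (m : ℕ) : ℕ :=
  sInf {n : ℕ | ∃ C : DPCover G m, dpCount C = n}

/-- The number of proper `m`-colorings (the chromatic polynomial evaluated at `m`). -/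
noncomputable def properCount {V : Type} (G : SimpleGraph V) (m : ℕ) : ℕ :=
  Nat.card {c : V → Fin m // ∀ u v : V, G.Adj u v → c u ≠ c v}

/-- A cover has a canonical labeling if lists can be renamed so all cross edges are
`(u,j)(v,j)`. -/
def DPCover.HasCanonicalLabeling {V : Type} {G : SimpleGraph V} {m : ℕ}
    (C : DPCover G m) : Prop :=
  ∃ σ : V → Equiv.Perm (Fin m), ∀ u v : V, G.Adj u v → ∀ j : Fin m,
    C.H.Adj (u, σ u j) (v, σ v j)

/-- `G` (on vertex set `W`) is a `K_p`-gluing of the vertex-disjoint graphs `Gs i`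
along the cliques `u i : Fin p → V i`, via the identification maps `φ i`. -/
structure IsCliqueGluing {n p : ℕ} {V : Fin n → Type} {W : Type}
    (Gs : ∀ i, SimpleGraph (V i)) (u : ∀ i, Fin p → V i)
    (G : SimpleGraph W) (φ : ∀ i, V i → W) : Prop where
  phi_inj : ∀ i, Function.Injective (φ i)
  u_inj : ∀ i, Function.Injective (u i)
  clique : ∀ i (q q' : Fin p), q ≠ q' → (Gs i).Adj (u i q) (u i q')
  glue : ∀ i j q, φ i (u i q) = φ j (u j q)
  covers : ∀ w : W, ∃ i x, φ i x = w
  inter : ∀ i j x y, i ≠ j → φ i x = φ j y → ∃ q, x = u i q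
  embed : ∀ i x y, G.Adj (φ i x) (φ i y) ↔ (Gs i).Adj x y
  no_extra : ∀ i j x y, i ≠ j → G.Adj (φ i x) (φ j y) →
    (∃ q, x = u i q) ∧ (∃ q', y = u j q')

section Aux

/-- Proper colorings of `Gc` extending a fixed coloring `κ` on the clique `u`. -/
abbrev ExtCount {V : Type} (Gc : SimpleGraph V) {p m : ℕ} (u : Fin p → V)
    (κ : Fin p → Fin m) : Type :=
  {c : V → Fin m // (∀ a b : V, Gc.Adj a b → c a ≠ c b) ∧ ∀ q, c (u q) = κ q}

lemma exists_perm_comp {p m : ℕ} {κ κ' : Fin p → Fin m}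
    (hκ : Function.Injective κ) (hκ' : Function.Injective κ') :
    ∃ σ : Equiv.Perm (Fin m), ∀ q, σ (κ q) = κ' q := by
  classical
  have hcard : Fintype.card ((Set.range κ)ᶜ : Set (Fin m)) =
      Fintype.card ((Set.range κ')ᶜ : Set (Fin m)) := by
    rw [Fintype.card_compl_set, Fintype.card_compl_set,
      Set.card_range_of_injective hκ, Set.card_range_of_injective hκ']
  refine ⟨((Equiv.Set.sumCompl (Set.range κ)).symm.trans
    (Equiv.sumCongr ((Equiv.ofInjective κ hκ).symm.trans (Equiv.ofInjective κ' hκ'))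
      (Fintype.equivOfCardEq hcard))).trans (Equiv.Set.sumCompl (Set.range κ')),
    fun q => ?_⟩
  have h1 : (Equiv.Set.sumCompl (Set.range κ)).symm (κ q) =
      Sum.inl ⟨κ q, Set.mem_range_self q⟩ :=
    Equiv.Set.sumCompl_symm_apply_of_mem (Set.mem_range_self q)
  have h2 : (Equiv.ofInjective κ hκ).symm ⟨κ q, Set.mem_range_self q⟩ = q := by
    have : (⟨κ q, Set.mem_range_self q⟩ : Set.range κ) = Equiv.ofInjective κ hκ q := rfl
    rw [this, Equiv.symm_apply_apply]
  simp [Equiv.trans_apply, h1, h2, Equiv.ofInjective_apply]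

lemma card_ext_eq {V : Type} (Gc : SimpleGraph V) {p m : ℕ} (u : Fin p → V)
    {κ κ' : Fin p → Fin m} (hκ : Function.Injective κ) (hκ' : Function.Injective κ') :
    Nat.card (ExtCount Gc u κ) = Nat.card (ExtCount Gc u κ') := by
  obtain ⟨σ, hσ⟩ := exists_perm_comp hκ hκ'
  refine Nat.card_congr (Equiv.subtypeEquiv (Equiv.arrowCongr (Equiv.refl V) σ) ?_)
  intro c
  constructor
  · rintro ⟨h1, h2⟩
    refine ⟨fun a b hab hc => h1 a b hab (σ.injective (by simpa using hc)), fun q => ?_⟩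
    simp [h2 q, hσ q]
  · rintro ⟨h1, h2⟩
    refine ⟨fun a b hab hc => h1 a b hab (by simpa using congrArg σ hc), fun q => ?_⟩
    have := h2 q
    simp only [Equiv.arrowCongr_apply, Equiv.coe_refl, Function.comp] at this
    exact σ.injective (by simpa using this.trans (hσ q).symm)

lemma extSigma_ext {p m n : ℕ} {V : Fin n → Type} (Gs : ∀ i, SimpleGraph (V i))
    (u : ∀ i, Fin p → V i)
    (s t : Σ κ : Fin p ↪ Fin m, ∀ i, ExtCount (Gs i) (u i) ⇑κ)
    (h1 : ∀ q, s.1 q = t.1 q) (h2 : ∀ i, (s.2 i).1 = (t.2 i).1) : s = t := by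
  obtain ⟨⟨f, finj⟩, g⟩ := s
  obtain ⟨⟨f', finj'⟩, g'⟩ := t
  have hf : f = f' := funext h1
  subst hf
  have hinj : finj = finj' := rfl
  subst hinj
  congr 1
  funext i
  exact Subtype.ext (h2 i)

lemma nat_card_sigma {ι : Type} [Fintype ι] (F : ι → Type) [∀ i, Finite (F i)] :
    Nat.card (Σ i, F i) = ∑ i, Nat.card (F i) := by
  classical
  letI : ∀ i, Fintype (F i) := fun i => Fintype.ofFinite _
  simp [Nat.card_eq_fintype_card]

lemma properCount_eq_mul {V : Type} [Fintype V] {p m : ℕ} (hm : p ≤ m)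
    (Gc : SimpleGraph V) (u : Fin p → V)
    (hu : ∀ q q' : Fin p, q ≠ q' → Gc.Adj (u q) (u q')) :
    properCount Gc m =
      (∏ i ∈ Finset.range p, (m - i)) * Nat.card (ExtCount Gc u (Fin.castLE hm)) := by
  classical
  have key : ∀ c : V → Fin m, (∀ a b : V, Gc.Adj a b → c a ≠ c b) →
      Function.Injective fun q => c (u q) := by
    intro c hc q q' heq
    by_contra hne
    exact hc _ _ (hu _ _ hne) heq
  have e : {c : V → Fin m // ∀ a b : V, Gc.Adj a b → c a ≠ c b} ≃
      Σ κ : Fin p ↪ Fin m, ExtCount Gc u ⇑κ :=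
    { toFun := fun c => ⟨⟨fun q => c.1 (u q), key c.1 c.2⟩, ⟨c.1, c.2, fun q => rfl⟩⟩
      invFun := fun x => ⟨x.2.1, x.2.2.1⟩
      left_inv := fun c => rfl
      right_inv := by
        rintro ⟨κ, c, hc1, hc2⟩
        have hκ : κ = ⟨fun q => c (u q), key c hc1⟩ :=
          DFunLike.ext _ _ fun q => (hc2 q).symm
        subst hκ
        rfl }
  rw [properCount, Nat.card_congr e, nat_card_sigma]
  rw [Finset.sum_congr rfl fun κ _ =>
    card_ext_eq Gc u κ.injective (Fin.castLE_injective hm)]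
  rw [Finset.sum_const, Finset.card_univ, Fintype.card_embedding_eq, Fintype.card_fin,
    Fintype.card_fin, smul_eq_mul, Nat.descFactorial_eq_prod_range]

end Aux
theorem properCount_cliqueGluing {n p m : ℕ} (hn : 2 ≤ n) (hm : p ≤ m)
    {V : Fin n → Type} [∀ i, Fintype (V i)] {W : Type} [Fintype W]
    (Gs : ∀ i, SimpleGraph (V i)) (u : ∀ i, Fin p → V i)
    (G : SimpleGraph W) (φ : ∀ i, V i → W)
    (h : IsCliqueGluing Gs u G φ) :
    properCount G m * (∏ i ∈ Finset.range p, (m - i)) ^ (n - 1) =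
      ∏ i : Fin n, properCount (Gs i) m := by
  classical
  obtain ⟨hphi, huinj, hclique, hglue, hcovers, hinter, hembed, hnoextra⟩ := h
  set D := ∏ i ∈ Finset.range p, (m - i) with hD
  set κ₀ : Fin p → Fin m := Fin.castLE hm with hκ₀
  set N : Fin n → ℕ := fun i => Nat.card (ExtCount (Gs i) (u i) κ₀) with hN
  have hGs : ∀ i, properCount (Gs i) m = D * N i := fun i =>
    properCount_eq_mul hm (Gs i) (u i) (hclique i)
  let I : Fin n := ⟨0, by omega⟩
  let T := {f : ∀ i, V i → Fin m //
    (∀ i, ∀ a b : V i, (Gs i).Adj a b → f i a ≠ f i b) ∧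
    ∀ i j q, f i (u i q) = f j (u j q)}
  have step1 : properCount G m = Nat.card T := by
    refine Nat.card_eq_of_bijective
      (fun c => (⟨fun i x => c.1 (φ i x),
        fun i a b hab => c.2 _ _ ((hembed i a b).mpr hab),
        fun i j q => congrArg c.1 (hglue i j q)⟩ : T)) ⟨?_, ?_⟩
    · intro c c' hcc
      apply Subtype.ext; funext w
      obtain ⟨i, x, rfl⟩ := hcovers w
      exact congrFun (congrFun (congrArg (fun t => t.1) hcc) i) x
    · rintro ⟨f, hf1, hf2⟩
      have compat : ∀ i j x y, φ i x = φ j y → f i x = f j y := by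
        intro i j x y hxy
        by_cases hij : i = j
        · subst hij; rw [hphi i hxy]
        · obtain ⟨q, rfl⟩ := hinter i j x y hij hxy
          have h3 : φ j (u j q) = φ j y := by rw [← hglue i j q]; exact hxy
          rw [← hphi j h3]; exact hf2 i j q
      have hjx : ∀ w : W, φ (hcovers w).choose (hcovers w).choose_spec.choose = w :=
        fun w => (hcovers w).choose_spec.choose_spec
      set c : W → Fin m := fun w => f (hcovers w).choose (hcovers w).choose_spec.choose
        with hcdef
      have hc : ∀ i x, c (φ i x) = f i x := fun i x => compat _ _ _ _ (hjx (φ i x))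
      have hproper : ∀ w w' : W, G.Adj w w' → c w ≠ c w' := by
        intro w w' hadj
        obtain ⟨i, x, rfl⟩ := hcovers w
        obtain ⟨j, y, rfl⟩ := hcovers w'
        rw [hc, hc]
        by_cases hij : i = j
        · subst hij
          exact hf1 i x y ((hembed i x y).mp hadj)
        · obtain ⟨⟨q, rfl⟩, ⟨q', rfl⟩⟩ := hnoextra i j x y hij hadj
          have hqq : q ≠ q' := by
            rintro rfl
            exact hadj.ne (hglue i j q)
          rw [hf2 j i q']
          exact hf1 i _ _ (hclique i q q' hqq)
      refine ⟨⟨c, hproper⟩, ?_⟩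
      exact Subtype.ext (funext fun i => funext fun x => hc i x)
  have keyI : ∀ f : T, Function.Injective fun q => f.1 I (u I q) := by
    intro f q q' heq
    by_contra hne
    exact f.2.1 I _ _ (hclique I q q' hne) heq
  have step2 : Nat.card T =
      Nat.card (Σ κ : Fin p ↪ Fin m, ∀ i, ExtCount (Gs i) (u i) ⇑κ) := by
    refine Nat.card_eq_of_bijective (fun f => ⟨⟨fun q => f.1 I (u I q), keyI f⟩,
      fun i => ⟨f.1 i, f.2.1 i, fun q => f.2.2 i I q⟩⟩) ⟨?_, ?_⟩
    · intro f f' hff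
      exact Subtype.ext (funext fun i => congrArg (fun s => (s.2 i).1) hff)
    · rintro ⟨κ, g⟩
      refine ⟨⟨fun i => (g i).1, fun i => (g i).2.1,
        fun i j q => ((g i).2.2 q).trans ((g j).2.2 q).symm⟩, ?_⟩
      exact extSigma_ext Gs u _ _ (fun q => (g I).2.2 q) (fun i => rfl)
  have step3 : Nat.card (Σ κ : Fin p ↪ Fin m, ∀ i, ExtCount (Gs i) (u i) ⇑κ) =
      D * ∏ i, N i := by
    rw [nat_card_sigma]
    have hconst : ∀ κ : Fin p ↪ Fin m,
        Nat.card (∀ i, ExtCount (Gs i) (u i) ⇑κ) = ∏ i, N i := by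
      intro κ
      rw [Nat.card_pi]
      exact Finset.prod_congr rfl fun i _ =>
        card_ext_eq (Gs i) (u i) κ.injective (Fin.castLE_injective hm)
    rw [Finset.sum_congr rfl fun κ _ => hconst κ, Finset.sum_const, Finset.card_univ,
      Fintype.card_embedding_eq, Fintype.card_fin, Fintype.card_fin, smul_eq_mul,
      Nat.descFactorial_eq_prod_range]
  have hG : properCount G m = D * ∏ i, N i := step1.trans (step2.trans step3)
  rw [hG, Finset.prod_congr rfl fun i _ => hGs i, Finset.prod_mul_distrib,
    Finset.prod_const, Finset.card_univ, Fintype.card_fin]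
  have hn1 : n - 1 + 1 = n := by omega
  have hpow : D ^ n = D * D ^ (n - 1) := by
    conv_lhs => rw [← hn1]
    rw [pow_succ']
  rw [hpow]
  ring
end

section
/- Let G be the edge-gluing of vertex-disjoint graphs G_1 and G_2 along edges u_1v_1 ∈ E(G_1) and u_2v_2 ∈ E(G_2) (identifying u_1,u_2 as u and v_1,v_2 as v). Let H_1, H_2 be m-fold covers of G_1, G_2 respectively with canonical edges (u_i,j)(v_i,j) for all j ∈ [m], let f be a permutation of [m], and let H be the f-amalgamated m-fold cover of G obtained from H_1 and H_2. Then the number of H-colorings of G equals Σ_{j_2=1}^m Σ_{j_1=1}^m N({(u_1,j_1),(v_1,j_2)}, H_1) · N({(u_2,f(j_1)),(v_2,f(j_2))}, H_2). -/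
open SimpleGraph

/-- `G` (on vertex set `W`) is the edge-gluing of the vertex-disjoint graphs
`G1`, `G2` along the edges `u1v1` and `u2v2`, identified via `φ1`, `φ2`. -/
structure IsEdgeGluing2 {V1 V2 W : Type} (G1 : SimpleGraph V1) (G2 : SimpleGraph V2)
    (u1 v1 : V1) (u2 v2 : V2) (G : SimpleGraph W) (φ1 : V1 → W) (φ2 : V2 → W) : Prop where
  inj1 : Function.Injective φ1
  inj2 : Function.Injective φ2
  glue_u : φ1 u1 = φ2 u2
  glue_v : φ1 v1 = φ2 v2
  covers : ∀ w : W, (∃ x, φ1 x = w) ∨ (∃ y, φ2 y = w)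
  inter : ∀ x y, φ1 x = φ2 y → (x = u1 ∧ y = u2) ∨ (x = v1 ∧ y = v2)
  embed1 : ∀ x y, G.Adj (φ1 x) (φ1 y) ↔ G1.Adj x y
  embed2 : ∀ x y, G.Adj (φ2 x) (φ2 y) ↔ G2.Adj x y
  no_extra : ∀ x y, G.Adj (φ1 x) (φ2 y) → (x = u1 ∨ x = v1) ∧ (y = u2 ∨ y = v2)

/-!
Relabel the lists of the second side by `f` at the glued vertices. Then `C` agrees with `C1` along
`φ1` and with the relabelled `C2` along `φ2`, and it has no edges between the two sides away from
the glued vertices. Hence a map `c` is a coloring of `C` exactly when its two restrictions are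
colorings of `C1` and `C2`; conversely, colorings of `C1` and `C2` taking the colors `j1, j2` and
`f j1, f j2` on the glued edge glue to a unique coloring of `C`. Counting the colorings of `C` by
their colors `j1, j2` at the glued edge gives the formula.
-/

namespace DPCover

variable {V : Type} {G : SimpleGraph V} {m : ℕ} (C : DPCover G m)

theorem adj_self_iff (v : V) (a b : Fin m) : C.H.Adj (v, a) (v, b) ↔ a ≠ b :=
  ⟨fun h hab => C.H.irrefl (hab ▸ h), C.part_complete v a b⟩

theorem adj_iff_eq_of_canonical {u v : V} (hcan : ∀ j : Fin m, C.H.Adj (u, j) (v, j))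
    (a b : Fin m) : C.H.Adj (u, a) (v, b) ↔ a = b := by
  refine ⟨fun h => ?_, fun h => h ▸ hcan a⟩
  have huv : u ≠ v := by
    rintro rfl
    exact C.H.irrefl (hcan a)
  exact (C.matching_right u v a b a huv h (hcan a)).symm

theorem nCount_pair (u v : V) (a b : Fin m) :
    NCount C {(u, a), (v, b)} =
      Nat.card {c : V → Fin m // C.IsColoring c ∧ c u = a ∧ c v = b} := by
  simp only [NCount, Set.forall_mem_insert, Set.mem_singleton_iff, forall_eq]

theorem dpCount_eq_sum_nCount_pair [Finite V] (u v : V) :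
    dpCount C = ∑ b : Fin m, ∑ a : Fin m, NCount C {(u, a), (v, b)} := by
  let e : {c : V → Fin m // C.IsColoring c} ≃
      Σ b : Fin m, Σ a : Fin m, {c : V → Fin m // C.IsColoring c ∧ c u = a ∧ c v = b} :=
    { toFun := fun c => ⟨c.1 v, c.1 u, c.1, c.2, rfl, rfl⟩
      invFun := fun t => ⟨t.2.2.1, t.2.2.2.1⟩
      left_inv := fun _ => rfl
      right_inv := by
        rintro ⟨b, a, c, hc, rfl, rfl⟩
        rfl }
  simp only [dpCount, Nat.card_congr e, Nat.card_sigma, nCount_pair]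

variable {W : Type} {G' : SimpleGraph W} (C' : DPCover G' m)

/-- Pairs `(x, x)` need no check: on a single list both covers are complete graphs. -/
theorem adj_comp_iff_of_forall_rel (φ : V → W) (ρ : V → Equiv.Perm (Fin m))
    (R : V → V → Prop) (hR : ∀ x y, x ≠ y → R x y ∨ R y x)
    (h : ∀ x y, R x y → ∀ a b,
      C'.H.Adj (φ x, a) (φ y, b) ↔ C.H.Adj (x, ρ x a) (y, ρ y b))
    (x y : V) (a b : Fin m) :
    C'.H.Adj (φ x, a) (φ y, b) ↔ C.H.Adj (x, ρ x a) (y, ρ y b) := by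
  rcases eq_or_ne x y with rfl | hxy
  · rw [adj_self_iff, adj_self_iff, (ρ x).injective.ne_iff]
  rcases hR x y hxy with hxy | hyx
  · exact h x y hxy a b
  · rw [SimpleGraph.adj_comm, h y x hyx b a, SimpleGraph.adj_comm]

end DPCover

theorem exists_comp_eq_comp_eq_of_agree {α β γ δ : Type*} {φ1 : α → γ} {φ2 : β → γ}
    (hcov : ∀ w, (∃ x, φ1 x = w) ∨ ∃ y, φ2 y = w)
    (inj1 : Function.Injective φ1) (inj2 : Function.Injective φ2)
    {c1 : α → δ} {c2 : β → δ} (hagree : ∀ x y, φ1 x = φ2 y → c1 x = c2 y) :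
    ∃ c : γ → δ, c ∘ φ1 = c1 ∧ c ∘ φ2 = c2 := by
  have hval : ∀ w, ∃ d, (∀ x, φ1 x = w → c1 x = d) ∧ (∀ y, φ2 y = w → c2 y = d) := by
    intro w
    rcases hcov w with ⟨x, rfl⟩ | ⟨y, rfl⟩
    · exact ⟨c1 x, fun x' hx' => congrArg c1 (inj1 hx'),
        fun y hy => (hagree x y hy.symm).symm⟩
    · exact ⟨c2 y, fun x hx => hagree x y hx, fun y' hy' => congrArg c2 (inj2 hy')⟩
  choose c hc using hval
  exact ⟨c, funext fun x => ((hc _).1 x rfl).symm, funext fun y => ((hc _).2 y rfl).symm⟩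

section Amalgamation

variable {V1 V2 W : Type} {G1 : SimpleGraph V1} {G2 : SimpleGraph V2} {G : SimpleGraph W}
  {u1 v1 : V1} {u2 v2 : V2} {φ1 : V1 → W} {φ2 : V2 → W} {m : ℕ}

theorem IsEdgeGluing2.not_adj_of_ne_glued (hglue : IsEdgeGluing2 G1 G2 u1 v1 u2 v2 G φ1 φ2)
    (C : DPCover G m) {x : V1} (hxu : x ≠ u1) (hxv : x ≠ v1) (y : V2) (a b : Fin m) :
    ¬ C.H.Adj (φ1 x, a) (φ2 y, b) := by
  intro h
  have hne : φ1 x ≠ φ2 y := fun e => by rcases hglue.inter x y e with h' | h' <;> tauto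
  have := (hglue.no_extra x y (C.cross _ _ _ _ hne h)).1
  tauto

/-- `C` is the `f`-amalgamated cover of the edge-gluing: away from the glued edge it agrees with
`C1` along `φ1` and with `C2` along `φ2`, the lists of the glued vertices being labelled as in
`C1`, where the label `j` corresponds to the label `f j` in `C2`. -/
structure IsAmalgamatedCover (C1 : DPCover G1 m) (C2 : DPCover G2 m) (C : DPCover G m)
    (φ1 : V1 → W) (φ2 : V2 → W) (u1 v1 : V1) (u2 v2 : V2) (f : Equiv.Perm (Fin m)) : Prop where
  inner1 : ∀ x y : V1, x ≠ u1 → x ≠ v1 → y ≠ u1 → y ≠ v1 → ∀ r s : Fin m,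
    (C.H.Adj (φ1 x, r) (φ1 y, s) ↔ C1.H.Adj (x, r) (y, s))
  inner2 : ∀ x y : V2, x ≠ u2 → x ≠ v2 → y ≠ u2 → y ≠ v2 → ∀ r s : Fin m,
    (C.H.Adj (φ2 x, r) (φ2 y, s) ↔ C2.H.Adj (x, r) (y, s))
  glued1 : ∀ x : V1, x ≠ u1 → x ≠ v1 → ∀ r j : Fin m,
    (C.H.Adj (φ1 x, r) (φ1 u1, j) ↔ C1.H.Adj (x, r) (u1, j)) ∧
    (C.H.Adj (φ1 x, r) (φ1 v1, j) ↔ C1.H.Adj (x, r) (v1, j))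
  glued2 : ∀ x : V2, x ≠ u2 → x ≠ v2 → ∀ r j : Fin m,
    (C.H.Adj (φ2 x, r) (φ1 u1, j) ↔ C2.H.Adj (x, r) (u2, f j)) ∧
    (C.H.Adj (φ2 x, r) (φ1 v1, j) ↔ C2.H.Adj (x, r) (v2, f j))
  glued_edge : ∀ j j' : Fin m, C.H.Adj (φ1 u1, j) (φ1 v1, j') ↔ j = j'

open Classical in
/-- The relabelling of the lists of `G2` under which the amalgamated cover agrees with `C2`. -/
noncomputable def gluedRelabel (u2 v2 : V2) (f : Equiv.Perm (Fin m)) (y : V2) :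
    Equiv.Perm (Fin m) :=
  if y = u2 ∨ y = v2 then f else 1

theorem gluedRelabel_of_ne {f : Equiv.Perm (Fin m)} {y : V2} (hyu : y ≠ u2) (hyv : y ≠ v2) :
    gluedRelabel u2 v2 f y = 1 :=
  if_neg (by tauto)

@[simp]
theorem gluedRelabel_left (f : Equiv.Perm (Fin m)) : gluedRelabel u2 v2 f u2 = f :=
  if_pos (Or.inl rfl)

@[simp]
theorem gluedRelabel_right (f : Equiv.Perm (Fin m)) : gluedRelabel u2 v2 f v2 = f :=
  if_pos (Or.inr rfl)

noncomputable def restrictRelabel (φ2 : V2 → W) (u2 v2 : V2) (f : Equiv.Perm (Fin m))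
    (c : W → Fin m) (y : V2) : Fin m :=
  gluedRelabel u2 v2 f y (c (φ2 y))

theorem IsEdgeGluing2.restrictRelabel_left (hglue : IsEdgeGluing2 G1 G2 u1 v1 u2 v2 G φ1 φ2)
    (f : Equiv.Perm (Fin m)) (c : W → Fin m) :
    restrictRelabel φ2 u2 v2 f c u2 = f (c (φ1 u1)) := by
  rw [restrictRelabel, gluedRelabel_left, hglue.glue_u]

theorem IsEdgeGluing2.restrictRelabel_right (hglue : IsEdgeGluing2 G1 G2 u1 v1 u2 v2 G φ1 φ2)
    (f : Equiv.Perm (Fin m)) (c : W → Fin m) :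
    restrictRelabel φ2 u2 v2 f c v2 = f (c (φ1 v1)) := by
  rw [restrictRelabel, gluedRelabel_right, hglue.glue_v]

theorem IsEdgeGluing2.eq_of_restrict_eq (hglue : IsEdgeGluing2 G1 G2 u1 v1 u2 v2 G φ1 φ2)
    {f : Equiv.Perm (Fin m)} {c c' : W → Fin m} (h1 : c ∘ φ1 = c' ∘ φ1)
    (h2 : restrictRelabel φ2 u2 v2 f c = restrictRelabel φ2 u2 v2 f c') : c = c' := by
  funext w
  rcases hglue.covers w with ⟨x, rfl⟩ | ⟨y, rfl⟩
  · exact congrFun h1 x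
  · exact (gluedRelabel u2 v2 f y).injective (congrFun h2 y)

theorem IsEdgeGluing2.exists_restrict_eq (hglue : IsEdgeGluing2 G1 G2 u1 v1 u2 v2 G φ1 φ2)
    {f : Equiv.Perm (Fin m)} {c1 : V1 → Fin m} {c2 : V2 → Fin m}
    (hu : c2 u2 = f (c1 u1)) (hv : c2 v2 = f (c1 v1)) :
    ∃ c : W → Fin m, c ∘ φ1 = c1 ∧ restrictRelabel φ2 u2 v2 f c = c2 := by
  obtain ⟨c, hc1, hc2⟩ := exists_comp_eq_comp_eq_of_agree hglue.covers hglue.inj1 hglue.inj2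
    (c2 := fun y => (gluedRelabel u2 v2 f y).symm (c2 y)) (c1 := c1) (by
      intro x y hxy
      rcases hglue.inter x y hxy with ⟨rfl, rfl⟩ | ⟨rfl, rfl⟩ <;> simp [hu, hv])
  refine ⟨c, hc1, funext fun y => ?_⟩
  change gluedRelabel u2 v2 f y ((c ∘ φ2) y) = c2 y
  rw [hc2]
  exact Equiv.apply_symm_apply _ _

variable {C1 : DPCover G1 m} {C2 : DPCover G2 m} {C : DPCover G m} {f : Equiv.Perm (Fin m)}

namespace IsAmalgamatedCover

theorem adj_comp_left_iff (hC : IsAmalgamatedCover C1 C2 C φ1 φ2 u1 v1 u2 v2 f)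
    (hcan1 : ∀ j : Fin m, C1.H.Adj (u1, j) (v1, j))
    (x y : V1) (a b : Fin m) : C.H.Adj (φ1 x, a) (φ1 y, b) ↔ C1.H.Adj (x, a) (y, b) := by
  refine C1.adj_comp_iff_of_forall_rel C φ1 (fun _ => Equiv.refl _)
    (fun x y => (x ≠ u1 ∧ x ≠ v1) ∨ (x = u1 ∧ y = v1)) (fun x y hxy => by grind) ?_ x y a b
  rintro x y (⟨hxu, hxv⟩ | ⟨rfl, rfl⟩) a b
  · by_cases hyu : y = u1
    · exact hyu ▸ (hC.glued1 x hxu hxv a b).1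
    by_cases hyv : y = v1
    · exact hyv ▸ (hC.glued1 x hxu hxv a b).2
    exact hC.inner1 x y hxu hxv hyu hyv a b
  · exact (hC.glued_edge a b).trans (C1.adj_iff_eq_of_canonical hcan1 a b).symm

theorem adj_comp_right_iff (hC : IsAmalgamatedCover C1 C2 C φ1 φ2 u1 v1 u2 v2 f)
    (hglue : IsEdgeGluing2 G1 G2 u1 v1 u2 v2 G φ1 φ2)
    (hcan2 : ∀ j : Fin m, C2.H.Adj (u2, j) (v2, j))
    (x y : V2) (a b : Fin m) :
    C.H.Adj (φ2 x, a) (φ2 y, b) ↔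
      C2.H.Adj (x, gluedRelabel u2 v2 f x a) (y, gluedRelabel u2 v2 f y b) := by
  refine C2.adj_comp_iff_of_forall_rel C φ2 (gluedRelabel u2 v2 f)
    (fun x y => (x ≠ u2 ∧ x ≠ v2) ∨ (x = u2 ∧ y = v2)) (fun x y hxy => by grind) ?_ x y a b
  rintro x y (⟨hxu, hxv⟩ | ⟨rfl, rfl⟩) a b
  · rw [gluedRelabel_of_ne hxu hxv, Equiv.Perm.one_apply]
    by_cases hyu : y = u2
    · subst hyu
      rw [gluedRelabel_left, ← hglue.glue_u]
      exact (hC.glued2 x hxu hxv a b).1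
    by_cases hyv : y = v2
    · subst hyv
      rw [gluedRelabel_right, ← hglue.glue_v]
      exact (hC.glued2 x hxu hxv a b).2
    rw [gluedRelabel_of_ne hyu hyv, Equiv.Perm.one_apply]
    exact hC.inner2 x y hxu hxv hyu hyv a b
  · rw [gluedRelabel_left, gluedRelabel_right, ← hglue.glue_u, ← hglue.glue_v, hC.glued_edge,
      C2.adj_iff_eq_of_canonical hcan2, f.injective.eq_iff]

theorem isColoring_iff (hC : IsAmalgamatedCover C1 C2 C φ1 φ2 u1 v1 u2 v2 f)
    (hglue : IsEdgeGluing2 G1 G2 u1 v1 u2 v2 G φ1 φ2)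
    (hcan1 : ∀ j : Fin m, C1.H.Adj (u1, j) (v1, j))
    (hcan2 : ∀ j : Fin m, C2.H.Adj (u2, j) (v2, j)) (c : W → Fin m) :
    C.IsColoring c ↔ C1.IsColoring (c ∘ φ1) ∧ C2.IsColoring (restrictRelabel φ2 u2 v2 f c) := by
  have h1 := hC.adj_comp_left_iff hcan1
  have h2 := hC.adj_comp_right_iff hglue hcan2
  refine ⟨fun hc => ⟨fun x y => (h1 x y _ _).not.mp (hc _ _),
    fun x y => (h2 x y _ _).not.mp (hc _ _)⟩, fun ⟨hc1, hc2⟩ => ?_⟩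
  have hmixed : ∀ x y, ¬ C.H.Adj (φ1 x, c (φ1 x)) (φ2 y, c (φ2 y)) := by
    intro x y
    by_cases hxu : x = u1
    · rw [hxu, hglue.glue_u, h2]
      exact hc2 _ _
    by_cases hxv : x = v1
    · rw [hxv, hglue.glue_v, h2]
      exact hc2 _ _
    exact hglue.not_adj_of_ne_glued C hxu hxv y _ _
  intro w w'
  rcases hglue.covers w with ⟨x, rfl⟩ | ⟨y, rfl⟩ <;>
    rcases hglue.covers w' with ⟨x', rfl⟩ | ⟨y', rfl⟩
  · exact (h1 x x' _ _).not.mpr (hc1 x x')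
  · exact hmixed x y'
  · exact fun h => hmixed x' y h.symm
  · exact (h2 y y' _ _).not.mpr (hc2 y y')

theorem card_colorings_eq_mul (hC : IsAmalgamatedCover C1 C2 C φ1 φ2 u1 v1 u2 v2 f)
    (hglue : IsEdgeGluing2 G1 G2 u1 v1 u2 v2 G φ1 φ2)
    (hcan1 : ∀ j : Fin m, C1.H.Adj (u1, j) (v1, j))
    (hcan2 : ∀ j : Fin m, C2.H.Adj (u2, j) (v2, j)) (j1 j2 : Fin m) :
    Nat.card {c : W → Fin m // C.IsColoring c ∧ c (φ1 u1) = j1 ∧ c (φ1 v1) = j2} =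
      Nat.card {c1 : V1 → Fin m // C1.IsColoring c1 ∧ c1 u1 = j1 ∧ c1 v1 = j2} *
      Nat.card {c2 : V2 → Fin m // C2.IsColoring c2 ∧ c2 u2 = f j1 ∧ c2 v2 = f j2} := by
  have hcol := hC.isColoring_iff hglue hcan1 hcan2
  rw [← Nat.card_prod]
  refine Nat.card_congr (Equiv.ofBijective (fun c =>
    (⟨c.1 ∘ φ1, ((hcol c.1).mp c.2.1).1, c.2.2⟩,
     ⟨restrictRelabel φ2 u2 v2 f c.1, ((hcol c.1).mp c.2.1).2,
       by rw [hglue.restrictRelabel_left, c.2.2.1], by rw [hglue.restrictRelabel_right, c.2.2.2]⟩))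
    ⟨fun c c' h => ?_, ?_⟩)
  · simp only [Prod.mk.injEq, Subtype.mk.injEq] at h
    exact Subtype.ext (hglue.eq_of_restrict_eq h.1 h.2)
  · rintro ⟨⟨c1, hc1, hu1, hv1⟩, ⟨c2, hc2, hu2, hv2⟩⟩
    obtain ⟨c, h1, h2⟩ := hglue.exists_restrict_eq (f := f) (c1 := c1) (c2 := c2)
      (by rw [hu1, hu2]) (by rw [hv1, hv2])
    refine ⟨⟨c, (hcol c).mpr ⟨h1 ▸ hc1, h2 ▸ hc2⟩, ?_, ?_⟩, ?_⟩
    · rw [← hu1, ← h1, Function.comp_apply]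
    · rw [← hv1, ← h1, Function.comp_apply]
    · exact Prod.ext (Subtype.ext h1) (Subtype.ext h2)

end IsAmalgamatedCover

end Amalgamation

theorem dpCount_amalgamated_edge_general {V1 V2 W : Type} [Fintype W]
    {G1 : SimpleGraph V1} {G2 : SimpleGraph V2} {G : SimpleGraph W}
    {u1 v1 : V1} {u2 v2 : V2} {φ1 : V1 → W} {φ2 : V2 → W}
    (hglue : IsEdgeGluing2 G1 G2 u1 v1 u2 v2 G φ1 φ2)
    {m : ℕ} (C1 : DPCover G1 m) (C2 : DPCover G2 m)
    (hcan1 : ∀ j : Fin m, C1.H.Adj (u1, j) (v1, j))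
    (hcan2 : ∀ j : Fin m, C2.H.Adj (u2, j) (v2, j))
    (f : Equiv.Perm (Fin m))
    (C : DPCover G m)
    -- `C` is the `f`-amalgamated cover of `G` obtained from `C1` and `C2`:
    (hinner1 : ∀ x y : V1, x ≠ u1 → x ≠ v1 → y ≠ u1 → y ≠ v1 → ∀ r s : Fin m,
      (C.H.Adj (φ1 x, r) (φ1 y, s) ↔ C1.H.Adj (x, r) (y, s)))
    (hinner2 : ∀ x y : V2, x ≠ u2 → x ≠ v2 → y ≠ u2 → y ≠ v2 → ∀ r s : Fin m,
      (C.H.Adj (φ2 x, r) (φ2 y, s) ↔ C2.H.Adj (x, r) (y, s)))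
    (hglued1 : ∀ x : V1, x ≠ u1 → x ≠ v1 → ∀ r j : Fin m,
      (C.H.Adj (φ1 x, r) (φ1 u1, j) ↔ C1.H.Adj (x, r) (u1, j)) ∧
      (C.H.Adj (φ1 x, r) (φ1 v1, j) ↔ C1.H.Adj (x, r) (v1, j)))
    (hglued2 : ∀ x : V2, x ≠ u2 → x ≠ v2 → ∀ r j : Fin m,
      (C.H.Adj (φ2 x, r) (φ1 u1, j) ↔ C2.H.Adj (x, r) (u2, f j)) ∧
      (C.H.Adj (φ2 x, r) (φ1 v1, j) ↔ C2.H.Adj (x, r) (v2, f j)))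
    (hgluededge : ∀ j j' : Fin m, C.H.Adj (φ1 u1, j) (φ1 v1, j') ↔ j = j') :
    dpCount C = ∑ j2 : Fin m, ∑ j1 : Fin m,
      NCount C1 ({(u1, j1), (v1, j2)} : Set (V1 × Fin m)) *
      NCount C2 ({(u2, f j1), (v2, f j2)} : Set (V2 × Fin m)) := by
  have hC : IsAmalgamatedCover C1 C2 C φ1 φ2 u1 v1 u2 v2 f :=
    ⟨hinner1, hinner2, hglued1, hglued2, hgluededge⟩
  rw [C.dpCount_eq_sum_nCount_pair (φ1 u1) (φ1 v1)]
  refine Finset.sum_congr rfl fun j2 _ => Finset.sum_congr rfl fun j1 _ => ?_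
  simp only [DPCover.nCount_pair]
  exact hC.card_colorings_eq_mul hglue hcan1 hcan2 j1 j2

theorem dpCount_amalgamated_edge {V1 V2 W : Type} [Fintype V1] [Fintype V2] [Fintype W]
    {G1 : SimpleGraph V1} {G2 : SimpleGraph V2} {G : SimpleGraph W}
    {u1 v1 : V1} {u2 v2 : V2} {φ1 : V1 → W} {φ2 : V2 → W}
    (hglue : IsEdgeGluing2 G1 G2 u1 v1 u2 v2 G φ1 φ2)
    (he1 : G1.Adj u1 v1) (he2 : G2.Adj u2 v2)
    {m : ℕ} (C1 : DPCover G1 m) (C2 : DPCover G2 m)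
    (hcan1 : ∀ j : Fin m, C1.H.Adj (u1, j) (v1, j))
    (hcan2 : ∀ j : Fin m, C2.H.Adj (u2, j) (v2, j))
    (f : Equiv.Perm (Fin m))
    (C : DPCover G m)
    -- `C` is the `f`-amalgamated cover of `G` obtained from `C1` and `C2`:
    (hinner1 : ∀ x y : V1, x ≠ u1 → x ≠ v1 → y ≠ u1 → y ≠ v1 → ∀ r s : Fin m,
      (C.H.Adj (φ1 x, r) (φ1 y, s) ↔ C1.H.Adj (x, r) (y, s)))
    (hinner2 : ∀ x y : V2, x ≠ u2 → x ≠ v2 → y ≠ u2 → y ≠ v2 → ∀ r s : Fin m,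
      (C.H.Adj (φ2 x, r) (φ2 y, s) ↔ C2.H.Adj (x, r) (y, s)))
    (hglued1 : ∀ x : V1, x ≠ u1 → x ≠ v1 → ∀ r j : Fin m,
      (C.H.Adj (φ1 x, r) (φ1 u1, j) ↔ C1.H.Adj (x, r) (u1, j)) ∧
      (C.H.Adj (φ1 x, r) (φ1 v1, j) ↔ C1.H.Adj (x, r) (v1, j)))
    (hglued2 : ∀ x : V2, x ≠ u2 → x ≠ v2 → ∀ r j : Fin m,
      (C.H.Adj (φ2 x, r) (φ1 u1, j) ↔ C2.H.Adj (x, r) (u2, f j)) ∧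
      (C.H.Adj (φ2 x, r) (φ1 v1, j) ↔ C2.H.Adj (x, r) (v2, f j)))
    (hgluededge : ∀ j j' : Fin m, C.H.Adj (φ1 u1, j) (φ1 v1, j') ↔ j = j') :
    dpCount C = ∑ j2 : Fin m, ∑ j1 : Fin m,
      NCount C1 ({(u1, j1), (v1, j2)} : Set (V1 × Fin m)) *
      NCount C2 ({(u2, f j1), (v2, f j2)} : Set (V2 × Fin m)) :=
  dpCount_amalgamated_edge_general hglue C1 C2 hcan1 hcan2 f C hinner1 hinner2 hglued1 hglued2
    hgluededge
end

section
/- Let G = C_{2k+1} be an odd cycle (k ≥ 1) and H = (L,H) an arbitrary m-fold cover of G with m ≥ 2. Then for each edge uv of G and every non-adjacent pair p_1 ∈ L(u), p_2 ∈ L(v) (p_1p_2 ∉ E(H)), the number of H-colorings containing {p_1,p_2} is at least P_DP(C_{2k+1},m)/(m(m-1)). -/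
open SimpleGraph

/-!
Removing the edge `uv` from `C_{2k+1}` leaves a path from `u` to `v` with `2k` edges. Extending
each matching of the cover along this path to a permutation yields a full cover of the path,
which has a canonical labeling: in it, the colorings from `a` to `b` correspond to the walks of
length `2k` in `K_m` between two given vertices. These colorings are `H`-colorings of the cycle
containing `{(u, a), (v, b)}`, since enlarging the matchings only removes colorings and `ab` is not
an edge. Their number is at least the number `t` of walks between two given distinct vertices,
because walks of even length between equal vertices outnumber those by exactly one. Finally, the
canonical cover of `C_{2k+1}` has `m (m - 1) t` colorings, which bounds `P_DP(C_{2k+1}, m)`.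
-/

open Finset

theorem Equiv.Perm.exists_apply_eq_of_rel {α : Type*} [Fintype α] {R : α → α → Prop}
    (hfun : ∀ x y y', R x y → R x y' → y = y') (hinj : ∀ x x' y, R x y → R x' y → x = x') :
    ∃ π : Equiv.Perm α, ∀ x y, R x y → π x = y := by
  classical
  let f : α → α := fun x => if h : ∃ y, R x y then h.choose else x
  have hf : ∀ x y, R x y → f x = y := fun x y h => by
    simp only [f, dif_pos (⟨y, h⟩ : ∃ y, R x y)]
    exact hfun _ _ _ (Exists.choose_spec ⟨y, h⟩) h
  have hf_inj : Set.InjOn f {x | ∃ y, R x y} := by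
    rintro x ⟨y, hy⟩ x' ⟨y', hy'⟩ h
    rw [hf x y hy, hf x' y' hy'] at h
    exact hinj x x' y hy (h ▸ hy')
  obtain ⟨g, hg⟩ := Set.MapsTo.exists_equiv_extend_of_card_eq (t := univ) (by simp)
    (fun _ _ => mem_univ _) hf_inj
  exact ⟨g.trans (Equiv.subtypeUnivEquiv mem_univ), fun x y h => (hg x ⟨y, h⟩).trans (hf x y h)⟩

theorem Finset.card_filter_mem_eq_sum {ι M : Type*} [DecidableEq M] (s : Finset ι) (f : ι → M)
    (t : Finset M) : #{i ∈ s | f i ∈ t} = ∑ x ∈ t, #{i ∈ s | f i = x} := by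
  rw [card_eq_sum_card_fiberwise (s := {i ∈ s | f i ∈ t}) (t := t)
    fun i hi => (mem_filter.1 hi).2]
  refine sum_congr rfl fun x hx => ?_
  rw [filter_filter]
  exact congrArg card (filter_congr fun i _ => ⟨fun h => h.2, fun h => ⟨h ▸ hx, h⟩⟩)

theorem Finset.sum_compl_singleton_ite {α : Type*} [Fintype α] [DecidableEq α] (y p : α)
    (s t : ℕ) :
    ∑ x ∈ {y}ᶜ, (if x = p then s else t) =
      if y = p then (Fintype.card α - 1) * t else s + (Fintype.card α - 2) * t := by
  split_ifs with hyp
  · subst hyp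
    rw [sum_congr rfl fun x hx => if_neg (by simpa using hx), sum_const, card_compl,
      card_singleton, smul_eq_mul]
  · have hp : p ∈ ({y}ᶜ : Finset α) := by simpa using Ne.symm hyp
    rw [← add_sum_erase _ _ hp, if_pos rfl,
      sum_congr rfl fun x hx => if_neg (ne_of_mem_erase hx), sum_const, card_erase_of_mem hp,
      card_compl, card_singleton, smul_eq_mul, Nat.sub_sub]

section TwistedWalks

variable {m : ℕ}

def permProd (σ : ℕ → Equiv.Perm (Fin m)) : ℕ → Equiv.Perm (Fin m)
  | 0 => 1
  | n + 1 => σ n * permProd σ n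

@[simp]
theorem permProd_one (n : ℕ) : permProd (fun _ => (1 : Equiv.Perm (Fin m))) n = 1 := by
  induction n with
  | zero => rfl
  | succ n ih => simp [permProd, ih]

/-- Colorings of the path `0 - 1 - ⋯ - L` starting at `a`, in the full cover whose matching
between the lists of `i` and `i + 1` is the graph of `σ i`. -/
def twistedWalks (σ : ℕ → Equiv.Perm (Fin m)) (L : ℕ) (a : Fin m) :
    Finset (Fin (L + 1) → Fin m) :=
  {c | c 0 = a ∧ ∀ i : Fin L, c i.succ ≠ σ i (c i.castSucc)}

/-- `(pathCounts m L).1` and `(pathCounts m L).2` are the numbers of walks of length `L` in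
`K_m` between two given distinct, resp. equal, vertices. -/
def pathCounts (m : ℕ) : ℕ → ℕ × ℕ
  | 0 => (0, 1)
  | L + 1 => ((pathCounts m L).2 + (m - 2) * (pathCounts m L).1, (m - 1) * (pathCounts m L).1)

theorem mem_twistedWalks {σ : ℕ → Equiv.Perm (Fin m)} {L : ℕ} {a : Fin m}
    {c : Fin (L + 1) → Fin m} :
    c ∈ twistedWalks σ L a ↔ c 0 = a ∧ ∀ i : Fin L, c i.succ ≠ σ i (c i.castSucc) := by
  simp [twistedWalks]

theorem twistedWalks_zero (σ : ℕ → Equiv.Perm (Fin m)) (a : Fin m) :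
    twistedWalks σ 0 a = {fun _ => a} := by
  ext c
  simp [twistedWalks, funext_iff, Fin.forall_fin_one]

theorem mem_twistedWalks_succ {σ : ℕ → Equiv.Perm (Fin m)} {L : ℕ} {a : Fin m}
    {c : Fin (L + 2) → Fin m} :
    c ∈ twistedWalks σ (L + 1) a ↔
      Fin.init c ∈ twistedWalks σ L a ∧ c (Fin.last _) ≠ σ L (c (Fin.last L).castSucc) := by
  simp [twistedWalks, Fin.forall_fin_succ' (n := L), Fin.init, and_assoc]

theorem card_twistedWalks_succ_last_eq (σ : ℕ → Equiv.Perm (Fin m)) (L : ℕ) (a b : Fin m) :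
    #{c ∈ twistedWalks σ (L + 1) a | c (Fin.last _) = b} =
      #{d ∈ twistedWalks σ L a | σ L (d (Fin.last L)) ≠ b} := by
  refine card_nbij' Fin.init (Fin.snoc · b) ?_ ?_ ?_ ?_ <;> intro c hc <;>
    simp only [coe_filter, Set.mem_ofPred_eq, mem_twistedWalks_succ] at hc ⊢
  · obtain ⟨⟨hinit, hstep⟩, rfl⟩ := hc
    exact ⟨hinit, Ne.symm hstep⟩
  · simp only [Fin.init_snoc, Fin.snoc_last, Fin.snoc_castSucc]
    simpa only [and_true] using ⟨hc.1, Ne.symm hc.2⟩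
  · simp only [Fin.snoc_init_self, ← hc.2]
  · exact Fin.init_snoc _ _

theorem card_twistedWalks_last_eq (σ : ℕ → Equiv.Perm (Fin m)) (L : ℕ) (a b : Fin m) :
    #{c ∈ twistedWalks σ L a | c (Fin.last L) = b} =
      if b = permProd σ L a then (pathCounts m L).2 else (pathCounts m L).1 := by
  induction L generalizing b with
  | zero =>
    rw [twistedWalks_zero, filter_singleton]
    by_cases hab : a = b
    · simp [hab, permProd, pathCounts]
    · simp [hab, Ne.symm hab, permProd, pathCounts]
  | succ L ih =>
    have hsymm : ∀ x, σ L x ≠ b ↔ x ∈ ({(σ L).symm b}ᶜ : Finset (Fin m)) := fun x => by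
      simp [Equiv.eq_symm_apply]
    simp only [card_twistedWalks_succ_last_eq, hsymm, card_filter_mem_eq_sum, ih,
      sum_compl_singleton_ite, Fintype.card_fin, Equiv.symm_apply_eq, permProd, pathCounts,
      Equiv.Perm.mul_apply]
    rfl

theorem pathCounts_snd_sub_fst (hm : 2 ≤ m) (L : ℕ) :
    ((pathCounts m L).2 : ℤ) - (pathCounts m L).1 = (-1) ^ L := by
  induction L with
  | zero => simp [pathCounts]
  | succ L ih =>
    simp only [pathCounts]
    push_cast [Nat.cast_sub (by omega : 1 ≤ m), Nat.cast_sub hm]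
    linear_combination (-1 : ℤ) * ih

theorem pathCounts_fst_le_snd (hm : 2 ≤ m) {L : ℕ} (hL : Even L) :
    (pathCounts m L).1 ≤ (pathCounts m L).2 := by
  have := pathCounts_snd_sub_fst hm L
  rw [hL.neg_one_pow] at this
  omega

theorem pathCounts_fst_le_card_twistedWalks (hm : 2 ≤ m) {L : ℕ} (hL : Even L)
    (σ : ℕ → Equiv.Perm (Fin m)) (a b : Fin m) :
    (pathCounts m L).1 ≤ #{c ∈ twistedWalks σ L a | c (Fin.last L) = b} := by
  rw [card_twistedWalks_last_eq]
  split_ifs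
  exacts [pathCounts_fst_le_snd hm hL, le_rfl]

end TwistedWalks

namespace SimpleGraph

variable {n : ℕ}

theorem cycleGraph_forall_adj_iff {P : Fin (n + 2) → Fin (n + 2) → Prop}
    (hP : ∀ i j, P i j → P j i) :
    (∀ i j, (cycleGraph (n + 2)).Adj i j → P i j) ↔
      (∀ k : Fin (n + 1), P k.castSucc k.succ) ∧ P (Fin.last _) 0 := by
  refine ⟨fun h => ⟨fun k => h _ _ ?_, h _ _ ?_⟩, fun ⟨hstep, hwrap⟩ => ?_⟩
  · simp [cycleGraph_adj, ← Fin.coeSucc_eq_succ]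
  · simp [cycleGraph_adj]
  · have hsucc : ∀ i, P i (i + 1) := fun i => by
      induction i using Fin.lastCases with
      | last => simpa using hwrap
      | cast k => simpa [Fin.coeSucc_eq_succ] using hstep k
    intro i j hij
    rcases cycleGraph_adj.1 hij with h | h
    · exact hP _ _ (by simpa [← h] using hsucc j)
    · simpa [← h] using hsucc i

def cycleGraph.addLeftIso (u : Fin (n + 2)) : cycleGraph (n + 2) ≃g cycleGraph (n + 2) where
  toEquiv := Equiv.addLeft u
  map_rel_iff' := by simp [cycleGraph_adj]

def cycleGraph.negIso : cycleGraph (n + 2) ≃g cycleGraph (n + 2) where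
  toEquiv := Equiv.neg _
  map_rel_iff' := by simp [cycleGraph_adj, neg_add_eq_sub, or_comm]

theorem cycleGraph_exists_iso_zero_last {u v : Fin (n + 2)} (huv : (cycleGraph (n + 2)).Adj u v) :
    ∃ φ : cycleGraph (n + 2) ≃g cycleGraph (n + 2), φ 0 = u ∧ φ (Fin.last _) = v := by
  rcases cycleGraph_adj.1 huv with h | h
  · refine ⟨cycleGraph.addLeftIso u, by simp [cycleGraph.addLeftIso], ?_⟩
    simp only [cycleGraph.addLeftIso, RelIso.coe_fn_mk, Equiv.coe_addLeft]
    rw [neg_eq_iff_eq_neg.1 (Fin.neg_last _), ← h]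
    abel
  · refine ⟨cycleGraph.negIso.trans (cycleGraph.addLeftIso u), ?_, ?_⟩ <;>
      simp [cycleGraph.addLeftIso, cycleGraph.negIso, ← h]

end SimpleGraph

namespace DPCover

variable {V V' : Type} {G : SimpleGraph V} {m : ℕ}

theorem isColoring_iff_forall_adj (C : DPCover G m) (c : V → Fin m) :
    C.IsColoring c ↔ ∀ u v, G.Adj u v → ¬ C.H.Adj (u, c u) (v, c v) := by
  refine ⟨fun h u v _ => h u v, fun h u v huv => ?_⟩
  by_cases heq : u = v
  · subst heq
    exact C.H.loopless.irrefl _ huv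
  · exact h u v (C.cross u v _ _ heq huv) huv

theorem isColoring_comp_symm_iff {G' : SimpleGraph V'} (C : DPCover G m) (φ : G' ≃g G)
    (c : V' → Fin m) :
    C.IsColoring (c ∘ φ.symm) ↔ ∀ i j, G'.Adj i j → ¬ C.H.Adj (φ i, c i) (φ j, c j) := by
  rw [isColoring_iff_forall_adj, φ.surjective.forall₂]
  simp [φ.map_adj_iff]

theorem exists_perm_of_ne (C : DPCover G m) {w z : V} (hwz : w ≠ z) :
    ∃ π : Equiv.Perm (Fin m), ∀ x y, C.H.Adj (w, x) (z, y) → π x = y :=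
  Equiv.Perm.exists_apply_eq_of_rel (C.matching_right w z · · · hwz)
    (C.matching_left w z · · · hwz)

def canonical (G : SimpleGraph V) (m : ℕ) : DPCover G m where
  H :=
    { Adj := fun p q => (p.1 = q.1 ∧ p.2 ≠ q.2) ∨ (G.Adj p.1 q.1 ∧ p.2 = q.2)
      symm := ⟨fun _ _ h => h.imp (fun h => ⟨h.1.symm, h.2.symm⟩) fun h => ⟨h.1.symm, h.2.symm⟩⟩
      loopless := ⟨fun _ h => h.elim (fun h => h.2 rfl) fun h => G.loopless.irrefl _ h.1⟩ }
  part_complete _ _ _ h := Or.inl ⟨rfl, h⟩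
  cross _ _ _ _ huv h := (h.resolve_left fun h => huv h.1).1
  matching_right _ _ _ _ _ huv h h' :=
    (h.resolve_left fun h => huv h.1).2.symm.trans (h'.resolve_left fun h => huv h.1).2
  matching_left _ _ _ _ _ huv h h' :=
    (h.resolve_left fun h => huv h.1).2.trans (h'.resolve_left fun h => huv h.1).2.symm

theorem dpCount_canonical (G : SimpleGraph V) (m : ℕ) :
    dpCount (canonical G m) = properCount G m := by
  refine Nat.card_congr (Equiv.subtypeEquivRight fun c => ?_)
  rw [isColoring_iff_forall_adj]
  refine forall₃_congr fun u v huv => ?_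
  simp [canonical, huv, huv.ne]

variable {n : ℕ}

theorem card_twistedWalks_le_NCount (C : DPCover (cycleGraph (n + 2)) m)
    (φ : cycleGraph (n + 2) ≃g cycleGraph (n + 2)) (σ : ℕ → Equiv.Perm (Fin m))
    (hσ : ∀ (k : Fin (n + 1)) x y, C.H.Adj (φ k.castSucc, x) (φ k.succ, y) → σ k x = y)
    {a b : Fin m} (hab : ¬ C.H.Adj (φ 0, a) (φ (Fin.last _), b)) :
    #{c ∈ twistedWalks σ (n + 1) a | c (Fin.last _) = b} ≤
      NCount C {(φ 0, a), (φ (Fin.last _), b)} := by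
  have hcolor : ∀ c ∈ twistedWalks σ (n + 1) a, c (Fin.last _) = b →
      C.IsColoring (c ∘ φ.symm) ∧
        ∀ p ∈ ({(φ 0, a), (φ (Fin.last _), b)} : Set _), (c ∘ φ.symm) p.1 = p.2 := by
    rintro c hc rfl
    obtain ⟨rfl, hstep⟩ := mem_twistedWalks.1 hc
    refine ⟨?_, by simp⟩
    rw [C.isColoring_comp_symm_iff, cycleGraph_forall_adj_iff fun _ _ h h' => h h'.symm]
    exact ⟨fun k h => hstep k (hσ k _ _ h).symm, fun h => hab h.symm⟩
  rw [NCount, ← Nat.card_eq_finsetCard]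
  refine Nat.card_le_card_of_injective
    (fun c => ⟨c.1 ∘ φ.symm, hcolor c.1 (mem_filter.1 c.2).1 (mem_filter.1 c.2).2⟩)
    fun c c' h => Subtype.ext ?_
  exact φ.symm.surjective.injective_comp_right (congrArg Subtype.val h)

theorem pathCounts_fst_le_NCount (hm : 2 ≤ m) (hn : Even (n + 1))
    (C : DPCover (cycleGraph (n + 2)) m) {u v : Fin (n + 2)} (huv : (cycleGraph (n + 2)).Adj u v)
    {a b : Fin m} (hab : ¬ C.H.Adj (u, a) (v, b)) :
    (pathCounts m (n + 1)).1 ≤ NCount C {(u, a), (v, b)} := by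
  obtain ⟨φ, rfl, rfl⟩ := cycleGraph_exists_iso_zero_last huv
  choose τ hτ using fun k : Fin (n + 1) =>
    C.exists_perm_of_ne (φ.injective.ne (Fin.castSucc_lt_succ (i := k)).ne)
  let σ : ℕ → Equiv.Perm (Fin m) := fun i => if h : i < n + 1 then τ ⟨i, h⟩ else 1
  have hσ : ∀ (k : Fin (n + 1)) x y, C.H.Adj (φ k.castSucc, x) (φ k.succ, y) → σ k x = y :=
    fun k => by simpa [σ, k.is_le] using hτ k
  exact (pathCounts_fst_le_card_twistedWalks hm hn σ a b).trans
    (C.card_twistedWalks_le_NCount φ σ hσ hab)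

end DPCover

theorem PDP_le_properCount {V : Type} (G : SimpleGraph V) (m : ℕ) :
    PDP G m ≤ properCount G m :=
  Nat.sInf_le ⟨DPCover.canonical G m, DPCover.dpCount_canonical G m⟩

theorem properCount_cycleGraph (n m : ℕ) :
    properCount (cycleGraph (n + 2)) m = m * ((m - 1) * (pathCounts m (n + 1)).1) := by
  classical
  have hfiber : ∀ a : Fin m,
      #{c : Fin (n + 2) → Fin m | (∀ u v, (cycleGraph (n + 2)).Adj u v → c u ≠ c v) ∧ c 0 = a} =
        #{c ∈ twistedWalks (fun _ => 1) (n + 1) a | c (Fin.last _) ∈ ({a}ᶜ : Finset (Fin m))} := by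
    intro a
    congr 1
    ext c
    simp only [mem_filter, mem_univ, true_and, mem_twistedWalks, Equiv.Perm.one_apply, mem_compl,
      mem_singleton]
    rw [cycleGraph_forall_adj_iff fun _ _ => Ne.symm]
    constructor
    · rintro ⟨⟨hstep, hwrap⟩, rfl⟩
      exact ⟨⟨rfl, fun k => (hstep k).symm⟩, hwrap⟩
    · rintro ⟨⟨rfl, hstep⟩, hwrap⟩
      exact ⟨⟨fun k => (hstep k).symm, hwrap⟩, rfl⟩
  rw [properCount, Nat.card_eq_fintype_card, Fintype.card_subtype,
    card_eq_sum_card_fiberwise (f := fun c => c 0) (t := univ) fun _ _ => mem_coe.2 (mem_univ _)]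
  simp only [filter_filter, hfiber, card_filter_mem_eq_sum, card_twistedWalks_last_eq,
    permProd_one, Equiv.Perm.one_apply, sum_compl_singleton_ite, if_true, Fintype.card_fin,
    sum_const, card_univ, smul_eq_mul]

theorem oddCycle_NCount_ge {k m : ℕ} (hk : 1 ≤ k) (hm : 2 ≤ m)
    (C : DPCover (SimpleGraph.cycleGraph (2 * k + 1)) m)
    (u v : Fin (2 * k + 1)) (huv : (SimpleGraph.cycleGraph (2 * k + 1)).Adj u v)
    (a b : Fin m) (hnadj : ¬ C.H.Adj (u, a) (v, b)) :
    PDP (SimpleGraph.cycleGraph (2 * k + 1)) m ≤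
      NCount C ({(u, a), (v, b)} : Set (Fin (2 * k + 1) × Fin m)) * (m * (m - 1)) := by
  obtain ⟨j, rfl⟩ : ∃ j, k = j + 1 := ⟨k - 1, by omega⟩
  calc PDP (cycleGraph (2 * j + 1 + 2)) m
      ≤ properCount (cycleGraph (2 * j + 1 + 2)) m := PDP_le_properCount _ m
    _ = (pathCounts m (2 * j + 1 + 1)).1 * (m * (m - 1)) := by
      rw [properCount_cycleGraph]
      ring
    _ ≤ NCount C {(u, a), (v, b)} * (m * (m - 1)) :=
      Nat.mul_le_mul_right _
        (C.pathCounts_fst_le_NCount (n := 2 * j + 1) hm ⟨j + 1, by ring⟩ huv hnadj)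
end

section
/- If G_1,…,G_n are vertex-disjoint odd cycles with u_iv_i ∈ E(G_i), and G is obtained by identifying u_1,…,u_n as u and v_1,…,v_n as v, then for all m ≥ 2, P_DP(G,m) = (∏_{i=1}^n P_DP(G_i,m)) / (m(m-1))^{n-1}. -/
open SimpleGraph

/-! The glued graph is a generalized theta graph: the edge `uv` together with the internally
disjoint `u`–`v` paths of even lengths `2 k_i` left by deleting `uv` from the cycles. Once the
colors `a, b` of `u, v` are fixed, the number of `H`-colorings is a product over the paths, and a
path contributes the number of color sequences from `a` to `b` that avoid the matchings along it.
Extending every matching to a perfect one can only lower this number, and for perfect matchings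
it is exactly `E_k + [b = π a]` for a permutation `π`, where `E_k = ((m - 1) ^ (2k) - 1) / m`.
Hence every cover has at least `m (m - 1) ∏ E_{k_i}` colorings, with equality for the cover
`G □ K_m`. For a single cycle this reads `P_DP(C_{2k+1}, m) = m (m - 1) E_k`, and the identity
follows. -/

open Finset Equiv
open scoped Classical

section PathCount

variable {α : Type*}

theorem Relator.BiUnique.exists_perm [Finite α] {F : α → α → Prop} (hF : Relator.BiUnique F) :
    ∃ σ : Perm α, ∀ c d, F c d → σ c = d := by
  obtain ⟨σ, hσ⟩ := Perm.exists_extending_pair (α := {p : α × α // F p.1 p.2})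
    (fun p => p.1.1) (fun p => p.1.2)
    (fun p q (h : p.1.1 = q.1.1) => Subtype.ext (Prod.ext h (hF.2 p.2 (h ▸ q.2))))
    (fun p q (h : p.1.2 = q.1.2) => Subtype.ext (Prod.ext (hF.1 p.2 (h ▸ q.2)) h))
  exact ⟨σ, fun c d h => hσ ⟨(c, d), h⟩⟩

/-- `g` colors the path `0, 1, …, t` from `a` to `b`, avoiding the forbidden pairs `F e` on
the edge `e (e + 1)`. -/
def IsPathColoring (F : ℕ → α → α → Prop) (t : ℕ) (a b : α) (g : Fin (t + 1) → α) : Prop :=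
  g 0 = a ∧ g (Fin.last t) = b ∧ ∀ e : Fin t, ¬ F e (g e.castSucc) (g e.succ)

noncomputable def pathCount (F : ℕ → α → α → Prop) (t : ℕ) (a b : α) : ℕ :=
  Nat.card {g // IsPathColoring F t a b g}

variable {F : ℕ → α → α → Prop} {a b : α}

theorem pathCount_zero : pathCount F 0 a b = if b = a then 1 else 0 := by
  have e : {g // IsPathColoring F 0 a b g} ≃ {c : α // c = a ∧ c = b} :=
    { toFun := fun g => ⟨g.1 0, g.2.1, g.2.2.1⟩
      invFun := fun c => ⟨fun _ => c.1, c.2.1, c.2.2, fun e => e.elim0⟩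
      left_inv := fun g => Subtype.ext (funext fun i => by rw [Fin.fin_one_eq_zero i])
      right_inv := fun _ => rfl }
  rw [pathCount, Nat.card_congr e]
  split_ifs with h
  · subst h
    simp
  · exact Nat.card_eq_zero.2 (.inl ⟨fun c => h (c.2.2.symm.trans c.2.1)⟩)

theorem IsPathColoring.init {t : ℕ} {g : Fin (t + 2) → α} (h : IsPathColoring F (t + 1) a b g) :
    IsPathColoring F t a (g (Fin.last t).castSucc) (Fin.init g) ∧
      ¬ F t (g (Fin.last t).castSucc) b := by
  obtain ⟨h0, hl, hg⟩ := h
  refine ⟨⟨h0, rfl, fun e => ?_⟩, by simpa [hl] using hg (Fin.last t)⟩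
  have := hg e.castSucc
  rwa [Fin.succ_castSucc] at this

theorem IsPathColoring.snoc {t : ℕ} {c : α} {g : Fin (t + 1) → α}
    (h : IsPathColoring F t a c g) (hc : ¬ F t c b) :
    IsPathColoring F (t + 1) a b (Fin.snoc g b) := by
  obtain ⟨h0, hl, hg⟩ := h
  refine ⟨by simpa using h0, by simp, fun e => ?_⟩
  induction e using Fin.lastCases with
  | last => simpa [hl] using hc
  | cast e =>
    rw [Fin.succ_castSucc, Fin.snoc_castSucc, Fin.snoc_castSucc]
    exact hg e

def isPathColoringSuccEquiv (t : ℕ) :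
    {g // IsPathColoring F (t + 1) a b g} ≃
      Σ c : {c // ¬ F t c b}, {g // IsPathColoring F t a c g} where
  toFun g := ⟨⟨_, g.2.init.2⟩, ⟨_, g.2.init.1⟩⟩
  invFun p := ⟨_, p.2.2.snoc p.1.2⟩
  left_inv g := Subtype.ext <| by
    conv_rhs => rw [← Fin.snoc_init_self g.1, g.2.2.1]
  right_inv p := Sigma.subtype_ext (Subtype.ext <| by simpa using p.2.2.2.1)
    (by simp)

theorem pathCount_succ [Fintype α] (t : ℕ) :
    pathCount F (t + 1) a b = ∑ c with ¬ F t c b, pathCount F t a c := by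
  rw [pathCount, Nat.card_congr (isPathColoringSuccEquiv t), Nat.card_sigma,
    Finset.sum_subtype (p := fun c => ¬ F t c b) _ (fun c => by simp) (pathCount F t a)]
  rfl

theorem pathCount_le_of_imp [Finite α] {F' : ℕ → α → α → Prop} {t : ℕ}
    (h : ∀ e < t, ∀ c d, F e c d → F' e c d) : pathCount F' t a b ≤ pathCount F t a b :=
  Nat.card_mono (Set.toFinite _) fun _ ⟨h0, hl, hg⟩ =>
    ⟨h0, hl, fun e hF => hg e (h e e.isLt _ _ hF)⟩

theorem sum_filter_not_add_of_perm [Fintype α] {R : α → α → Prop} {σ : Perm α}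
    (hR : ∀ c, R c b ↔ σ c = b) (x : α → ℕ) : ∑ c with ¬ R c b, x c + x (σ.symm b) = ∑ c, x c := by
  have : ({c | R c b} : Finset α) = {σ.symm b} := by
    ext c
    simp [hR, Equiv.eq_symm_apply]
  rw [← Finset.sum_filter_not_add_sum_filter univ (fun c => R c b), this, sum_singleton]

def permComp (σ : ℕ → Perm α) : ℕ → Perm α
  | 0 => 1
  | t + 1 => σ t * permComp σ t

@[simp]
theorem permComp_one (t : ℕ) : permComp (fun _ => (1 : Perm α)) t = 1 := by
  induction t <;> simp [permComp, *]

variable [Fintype α]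

/-- `((q - 1) ^ (2 * j) - 1) / q`, the off-diagonal entry of `(J - I) ^ (2 * j)` for the all-ones
`q × q` matrix `J`. -/
def evenPathBound (q : ℕ) : ℕ → ℕ
  | 0 => 0
  | j + 1 => (q - 1) ^ 2 * evenPathBound q j + (q - 2)

theorem pathCount_succ_add_of_perm {t : ℕ} {σ : Perm α} (hσ : ∀ c d, F t c d ↔ σ c = d)
    (b : α) : pathCount F (t + 1) a b + pathCount F t a (σ.symm b) = ∑ c, pathCount F t a c := by
  rw [pathCount_succ]
  exact sum_filter_not_add_of_perm (fun c => hσ c b) _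

theorem sum_pathCount_succ_add_sum_of_perm {t : ℕ} {σ : Perm α} (hσ : ∀ c d, F t c d ↔ σ c = d) :
    ∑ b, pathCount F (t + 1) a b + ∑ c, pathCount F t a c =
      Fintype.card α * ∑ c, pathCount F t a c := by
  calc ∑ b, pathCount F (t + 1) a b + ∑ c, pathCount F t a c
      = ∑ b, (pathCount F (t + 1) a b + pathCount F t a (σ.symm b)) := by
        rw [sum_add_distrib, σ.symm.sum_comp]
    _ = ∑ _b : α, ∑ c, pathCount F t a c := sum_congr rfl fun b _ => pathCount_succ_add_of_perm hσ b
    _ = _ := by rw [sum_const, card_univ, smul_eq_mul]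

theorem pathCount_add_two_of_perm (hq : 2 ≤ Fintype.card α) {t E : ℕ} {p : α} {σ τ : Perm α}
    (hσ : ∀ c d, F t c d ↔ σ c = d) (hτ : ∀ c d, F (t + 1) c d ↔ τ c = d)
    (hx : ∀ c, pathCount F t a c = E + if c = p then 1 else 0) (b : α) :
    pathCount F (t + 2) a b =
      (Fintype.card α - 1) ^ 2 * E + (Fintype.card α - 2) + if b = τ (σ p) then 1 else 0 := by
  obtain ⟨q, hcard⟩ : ∃ q, Fintype.card α = q + 2 := ⟨_, (Nat.sub_add_cancel hq).symm⟩
  have hs : ∑ c, pathCount F t a c = (q + 2) * E + 1 := by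
    simp [hx, sum_add_distrib, hcard]
  -- with `x, y, z` the counts after `t, t + 1, t + 2` steps and `s = ∑ x`:
  -- `z b + y (τ⁻¹ b) = ∑ y`, `y (τ⁻¹ b) + x (σ⁻¹ τ⁻¹ b) = s` and `∑ y + s = (q + 2) s`
  have hz := pathCount_succ_add_of_perm (a := a) hτ b
  have hy := pathCount_succ_add_of_perm (a := a) hσ (τ.symm b)
  have hsum := sum_pathCount_succ_add_sum_of_perm (a := a) hσ
  rw [hs, hx] at hy
  rw [hs, hcard] at hsum
  simp only [Equiv.symm_apply_eq] at hy
  rw [hcard, show q + 2 - 1 = q + 1 by omega, show q + 2 - 2 = q by omega]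
  change pathCount F (t + 1 + 1) a b = _
  linarith

theorem pathCount_two_mul_of_perm (hq : 2 ≤ Fintype.card α) {j : ℕ} {σ : ℕ → Perm α}
    (hF : ∀ e < 2 * j, ∀ c d, F e c d ↔ σ e c = d) (b : α) :
    pathCount F (2 * j) a b =
      evenPathBound (Fintype.card α) j + if b = permComp σ (2 * j) a then 1 else 0 := by
  induction j generalizing b with
  | zero =>
    simp only [Nat.mul_zero, pathCount_zero, evenPathBound, permComp, Perm.one_apply, zero_add]
    rfl
  | succ j ih =>
    exact pathCount_add_two_of_perm hq (hF _ (by omega)) (hF _ (by omega))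
      (ih fun e he => hF e (by omega)) b

theorem evenPathBound_le_pathCount (hq : 2 ≤ Fintype.card α) {j : ℕ}
    (hF : ∀ e < 2 * j, Relator.BiUnique (F e)) (b : α) :
    evenPathBound (Fintype.card α) j ≤ pathCount F (2 * j) a b := by
  choose! σ hσ using fun e (he : e < 2 * j) => (hF e he).exists_perm
  calc evenPathBound (Fintype.card α) j
      ≤ pathCount (fun e c d => σ e c = d) (2 * j) a b := by
        rw [pathCount_two_mul_of_perm hq (fun _ _ _ _ => Iff.rfl)]
        exact Nat.le_add_right _ _
    _ ≤ pathCount F (2 * j) a b := pathCount_le_of_imp hσ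

end PathCount

theorem Relator.RightUnique.card_mul_pred_le {α : Type*} [Fintype α] {R : α → α → Prop}
    (hR : Relator.RightUnique R) :
    Fintype.card α * (Fintype.card α - 1) ≤ #{p : α × α | ¬ R p.1 p.2} := by
  have hrow : ∀ a, Fintype.card α - 1 ≤ #{b | ¬ R a b} := fun a => by
    have h1 : #{b | R a b} ≤ 1 :=
      card_le_one.2 fun b hb c hc => hR (mem_filter.1 hb).2 (mem_filter.1 hc).2
    have h2 := card_filter_add_card_filter_not (s := univ) fun b => R a b
    rw [card_univ] at h2
    omega
  calc Fintype.card α * (Fintype.card α - 1) = ∑ _a : α, (Fintype.card α - 1) := by simp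
    _ ≤ ∑ a, #{b | ¬ R a b} := sum_le_sum fun a _ => hrow a
    _ = _ := by simp only [card_filter, Fintype.sum_prod_type]

section Theta

variable {W : Type} {I : Type*} {m : ℕ} {G : SimpleGraph W}

theorem DPCover.biUnique (C : DPCover G m) {x y : W} (hxy : x ≠ y) :
    Relator.BiUnique fun c d => C.H.Adj (x, c) (y, d) :=
  ⟨fun _ _ _ => C.matching_left x y _ _ _ hxy, fun _ _ _ => C.matching_right x y _ _ _ hxy⟩

def DPCover.alongPath (C : DPCover G m) (p : ℕ → W) (e : ℕ) (c d : Fin m) : Prop :=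
  C.H.Adj (p e, c) (p (e + 1), d)

/-- `G` is the generalized theta graph formed by the edge `uv` and the internally disjoint
`u`–`v` paths `w i 0, w i 1, …, w i (t i)`. -/
structure IsThetaGraph (G : SimpleGraph W) (u v : W) (t : I → ℕ) (w : I → ℕ → W) : Prop where
  zero : ∀ i, w i 0 = u
  last : ∀ i, w i (t i) = v
  injOn : ∀ i, Set.InjOn (w i) (Set.Iic (t i))
  endpoints_of_eq : ∀ i j, i ≠ j → ∀ e ≤ t i, ∀ f ≤ t j, w i e = w j f →
    e = 0 ∧ f = 0 ∨ e = t i ∧ f = t j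
  cover : ∀ x, ∃ i, ∃ e ≤ t i, w i e = x
  adj_iff : ∀ x y, G.Adj x y ↔
    s(x, y) = s(u, v) ∨ ∃ i, ∃ e < t i, s(x, y) = s(w i e, w i (e + 1))

namespace IsThetaGraph

variable {u v : W} {t : I → ℕ} {w : I → ℕ → W} (S : IsThetaGraph G u v t w)
include S

theorem adj : G.Adj u v := (S.adj_iff u v).2 (.inl rfl)

theorem adj_succ {i : I} {e : ℕ} (he : e < t i) : G.Adj (w i e) (w i (e + 1)) :=
  (S.adj_iff _ _).2 (.inr ⟨i, e, he, rfl⟩)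

theorem eq_zero_of_apply_eq {i : I} {e : ℕ} (he : e ≤ t i) (h : w i e = u) : e = 0 :=
  S.injOn i he (Nat.zero_le _) (h.trans (S.zero i).symm)

theorem eq_last_of_apply_eq {i : I} {e : ℕ} (he : e ≤ t i) (h : w i e = v) : e = t i :=
  S.injOn i he (le_refl (t i)) (h.trans (S.last i).symm)

theorem map {W' : Type} {G' : SimpleGraph W'} (f : G ≃g G') :
    IsThetaGraph G' (f u) (f v) t fun i e => f (w i e) where
  zero i := by rw [S.zero]
  last i := by rw [S.last]
  injOn i := f.injective.comp_injOn (S.injOn i)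
  endpoints_of_eq i j hij e he e' he' h := S.endpoints_of_eq i j hij e he e' he' (f.injective h)
  cover x := by
    obtain ⟨i, e, he, h⟩ := S.cover (f.symm x)
    exact ⟨i, e, he, by simp [h]⟩
  adj_iff x y := by
    obtain ⟨x, rfl⟩ := f.surjective x
    obtain ⟨y, rfl⟩ := f.surjective y
    simp only [f.map_adj_iff, S.adj_iff, Sym2.eq_iff, f.injective.eq_iff]

noncomputable def glue {α : Type*} (g : ∀ i, Fin (t i + 1) → α) (x : W) : α :=
  g (S.cover x).choose
    ⟨(S.cover x).choose_spec.choose, Nat.lt_succ_of_le (S.cover x).choose_spec.choose_spec.1⟩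

variable {α : Type*} {g : ∀ i, Fin (t i + 1) → α} {a b : α}

theorem glue_apply (hg0 : ∀ i, g i 0 = a) (hgl : ∀ i, g i (Fin.last _) = b) (i : I)
    (e : Fin (t i + 1)) : S.glue g (w i e) = g i e := by
  -- name the point chosen by `glue`, so that it can be substituted
  obtain ⟨j, f, hf, hw, hglue⟩ : ∃ j f, ∃ hf : f ≤ t j, w j f = w i e ∧
      S.glue g (w i e) = g j ⟨f, Nat.lt_succ_of_le hf⟩ :=
    ⟨_, _, (S.cover (w i e)).choose_spec.choose_spec.1,
      (S.cover (w i e)).choose_spec.choose_spec.2, rfl⟩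
  rw [hglue]
  by_cases hji : j = i
  · subst hji
    obtain rfl : f = e := S.injOn j hf (Nat.le_of_lt_succ e.2) hw
    rfl
  · rcases S.endpoints_of_eq j i hji f hf e (Nat.le_of_lt_succ e.2) hw with
      ⟨rfl, he⟩ | ⟨rfl, he⟩
    · rw [show e = 0 from Fin.ext he]
      exact (hg0 j).trans (hg0 i).symm
    · rw [show e = Fin.last _ from Fin.ext he]
      exact (hgl j).trans (hgl i).symm

theorem glue_left (hg0 : ∀ i, g i 0 = a) (hgl : ∀ i, g i (Fin.last _) = b) : S.glue g u = a := by
  obtain ⟨i, -⟩ := S.cover u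
  simpa [S.zero, hg0] using S.glue_apply hg0 hgl i 0

theorem glue_right (hg0 : ∀ i, g i 0 = a) (hgl : ∀ i, g i (Fin.last _) = b) :
    S.glue g v = b := by
  obtain ⟨i, -⟩ := S.cover v
  simpa [S.last, hgl] using S.glue_apply hg0 hgl i (Fin.last _)

theorem isColoring_glue (C : DPCover G m) {g : ∀ i, Fin (t i + 1) → Fin m} {a b : Fin m}
    (hab : ¬ C.H.Adj (u, a) (v, b))
    (hg : ∀ i, IsPathColoring (C.alongPath (w i)) (t i) a b (g i)) :
    C.IsColoring (S.glue g) := by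
  have hg0 : ∀ i, g i 0 = a := fun i => (hg i).1
  have hgl : ∀ i, g i (Fin.last _) = b := fun i => (hg i).2.1
  intro x y hxy
  by_cases hne : x = y
  · subst hne
    exact C.H.irrefl hxy
  rcases (S.adj_iff x y).1 (C.cross x y _ _ hne hxy) with h | ⟨i, e, he, h⟩
  · rw [Sym2.eq_iff] at h
    rcases h with ⟨rfl, rfl⟩ | ⟨rfl, rfl⟩ <;>
      rw [S.glue_left hg0 hgl, S.glue_right hg0 hgl] at hxy
    exacts [hab hxy, hab hxy.symm]
  · have hpath := (hg i).2.2 ⟨e, he⟩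
    rw [Sym2.eq_iff] at h
    rcases h with ⟨rfl, rfl⟩ | ⟨rfl, rfl⟩ <;>
      rw [S.glue_apply hg0 hgl i ⟨e, by omega⟩, S.glue_apply hg0 hgl i ⟨e + 1, by omega⟩] at hxy
    exacts [hpath hxy, hpath hxy.symm]

noncomputable def coloringEquiv (C : DPCover G m) :
    {c // C.IsColoring c} ≃ Σ p : Fin m × Fin m, {g : ∀ i, Fin (t i + 1) → Fin m //
      ¬ C.H.Adj (u, p.1) (v, p.2) ∧
        ∀ i, IsPathColoring (C.alongPath (w i)) (t i) p.1 p.2 (g i)} where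
  toFun c := ⟨(c.1 u, c.1 v), fun i e => c.1 (w i e), c.2 u v, fun i =>
    ⟨by simp [S.zero], by simp [S.last], fun _ => c.2 _ _⟩⟩
  invFun p := ⟨S.glue p.2.1, S.isColoring_glue C p.2.2.1 p.2.2.2⟩
  left_inv c := Subtype.ext <| funext fun x =>
    congrArg c.1 (S.cover x).choose_spec.choose_spec.2
  right_inv := by
    rintro ⟨⟨a, b⟩, g, hab, hg⟩
    have hg0 : ∀ i, g i 0 = a := fun i => (hg i).1
    have hgl : ∀ i, g i (Fin.last _) = b := fun i => (hg i).2.1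
    refine Sigma.subtype_ext ?_ (funext₂ (S.glue_apply hg0 hgl))
    simp [S.glue_left hg0 hgl, S.glue_right hg0 hgl]

theorem dpCount_eq (C : DPCover G m) [Fintype I] :
    dpCount C = ∑ p : Fin m × Fin m with ¬ C.H.Adj (u, p.1) (v, p.2),
      ∏ i, pathCount (C.alongPath (w i)) (t i) p.1 p.2 := by
  rw [dpCount, Nat.card_congr (S.coloringEquiv C), Nat.card_sigma, sum_filter]
  refine sum_congr rfl fun p _ => ?_
  split_ifs with hp
  · exact Nat.card_eq_zero.2 (.inl ⟨fun g => g.2.1 hp⟩)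
  · rw [Nat.card_congr ((Equiv.subtypeEquivRight fun g => and_iff_right hp).trans
      Equiv.subtypePiEquivPi), Nat.card_pi]
    rfl

end IsThetaGraph

end Theta

section PDP

variable {W : Type} {I : Type*} [Fintype I] {m : ℕ} {G : SimpleGraph W}

def DPCover.canonical_s7 (G : SimpleGraph W) (m : ℕ) : DPCover G m where
  H := G □ ⊤
  part_complete v a b hab := by simp [boxProd_adj, hab]
  cross u v a b huv h := by
    rcases boxProd_adj.1 h with ⟨h, -⟩ | ⟨-, h⟩
    exacts [h, absurd h huv]
  matching_right u v a b b' huv h h' := by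
    simp only [boxProd_adj, huv, and_false, or_false] at h h'
    exact h.2.symm.trans h'.2
  matching_left u v a a' b huv h h' := by
    simp only [boxProd_adj, huv, and_false, or_false] at h h'
    exact h.2.trans h'.2.symm

theorem DPCover.canonical_adj {x y : W} (hxy : G.Adj x y) {c d : Fin m} :
    (DPCover.canonical_s7 G m).H.Adj (x, c) (y, d) ↔ c = d := by
  simp [DPCover.canonical_s7, boxProd_adj, hxy, hxy.ne]

namespace IsThetaGraph

variable {u v : W} {κ : I → ℕ} {w : I → ℕ → W} (S : IsThetaGraph G u v (fun i => 2 * κ i) w)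
include S

theorem mul_prod_evenPathBound_le_dpCount (hm : 2 ≤ m) (C : DPCover G m) :
    m * (m - 1) * ∏ i, evenPathBound m (κ i) ≤ dpCount C := by
  have hpath (i : I) (p : Fin m × Fin m) :
      evenPathBound m (κ i) ≤ pathCount (C.alongPath (w i)) (2 * κ i) p.1 p.2 := by
    have := evenPathBound_le_pathCount (F := C.alongPath (w i)) (j := κ i) (a := p.1)
      (by simpa using hm) (fun e he => C.biUnique (S.adj_succ he).ne) p.2
    rwa [Fintype.card_fin] at this
  have hpairs := (C.biUnique S.adj.ne).2.card_mul_pred_le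
  rw [Fintype.card_fin] at hpairs
  rw [S.dpCount_eq C]
  calc m * (m - 1) * ∏ i, evenPathBound m (κ i)
      ≤ #{p : Fin m × Fin m | ¬ C.H.Adj (u, p.1) (v, p.2)} * ∏ i, evenPathBound m (κ i) := by
        gcongr
    _ = ∑ p : Fin m × Fin m with ¬ C.H.Adj (u, p.1) (v, p.2), ∏ i, evenPathBound m (κ i) := by
        rw [sum_const, smul_eq_mul]
    _ ≤ _ := sum_le_sum fun p _ => prod_le_prod' fun i _ => hpath i p

theorem dpCount_canonical (hm : 2 ≤ m) :
    dpCount (DPCover.canonical_s7 G m) = m * (m - 1) * ∏ i, evenPathBound m (κ i) := by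
  have hpath (i : I) {a b : Fin m} (hab : a ≠ b) :
      pathCount ((DPCover.canonical_s7 G m).alongPath (w i)) (2 * κ i) a b =
        evenPathBound m (κ i) := by
    have := pathCount_two_mul_of_perm (F := (DPCover.canonical_s7 G m).alongPath (w i))
      (j := κ i) (a := a) (by simpa using hm) (σ := fun _ => 1)
      (fun e he c d => DPCover.canonical_adj (S.adj_succ he)) b
    simpa [Ne.symm hab] using this
  rw [S.dpCount_eq]
  calc _ = ∑ p : Fin m × Fin m with ¬ (DPCover.canonical_s7 G m).H.Adj (u, p.1) (v, p.2),
        ∏ i, evenPathBound m (κ i) :=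
        sum_congr rfl fun p hp => prod_congr rfl fun i _ =>
          hpath i ((DPCover.canonical_adj S.adj).not.1 (mem_filter.1 hp).2)
    _ = #(univ : Finset (Fin m)).offDiag * ∏ i, evenPathBound m (κ i) := by
      rw [sum_const, smul_eq_mul]
      congr 2
      ext p
      simp [DPCover.canonical_adj S.adj]
    _ = _ := by rw [offDiag_card, card_univ, Fintype.card_fin, Nat.mul_sub_one]

theorem PDP_eq (hm : 2 ≤ m) : PDP G m = m * (m - 1) * ∏ i, evenPathBound m (κ i) :=
  le_antisymm (Nat.sInf_le ⟨_, S.dpCount_canonical hm⟩)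
    (le_csInf ⟨_, DPCover.canonical_s7 G m, rfl⟩ fun _ ⟨C, hC⟩ =>
      hC ▸ S.mul_prod_evenPathBound_le_dpCount hm C)

end IsThetaGraph

end PDP

section Cycle

open Fin.NatCast

theorem Fin.val_sub_eq_one_iff {n : ℕ} (hn : 1 ≤ n) {a b : Fin (n + 1)} :
    ((a - b : Fin (n + 1)) : ℕ) = 1 ↔ (a : ℕ) = b + 1 ∨ (a : ℕ) = 0 ∧ (b : ℕ) = n := by
  have := a.isLt
  have := b.isLt
  rcases le_or_gt b a with h | h
  · rw [Fin.coe_sub_iff_le.2 h]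
    have := Fin.le_iff_val_le_val.1 h
    omega
  · rw [Fin.coe_sub_iff_lt.2 h]
    have := Fin.lt_def.1 h
    omega

theorem cycleGraph_adj_iff_sym2 {n : ℕ} (hn : 1 ≤ n) {x y : Fin (n + 1)} :
    (cycleGraph (n + 1)).Adj x y ↔ s(x, y) = s(0, Fin.last n) ∨
      ∃ e < n, s(x, y) = s((e : Fin (n + 1)), ((e + 1 : ℕ) : Fin (n + 1))) := by
  have hval (e : ℕ) (he : e ≤ n) : ((e : Fin (n + 1)) : ℕ) = e := Fin.val_cast_of_lt (by omega)
  have hcast (z : Fin (n + 1)) (e : ℕ) (he : e ≤ n) (h : (z : ℕ) = e) : z = e :=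
    Fin.ext (by rw [hval e he, h])
  have hx := x.isLt
  have hy := y.isLt
  rw [cycleGraph_adj', Fin.val_sub_eq_one_iff hn, Fin.val_sub_eq_one_iff hn]
  constructor
  · rintro ((h | ⟨h0, hn⟩) | (h | ⟨h0, hn⟩))
    · exact .inr ⟨y, by omega, Sym2.eq_swap.trans
        (congrArg₂ _ (hcast y y (by omega) rfl) (hcast x (y + 1) (by omega) h))⟩
    · exact .inl (congrArg₂ _ (Fin.ext h0) (Fin.ext hn))
    · exact .inr ⟨x, by omega,
        congrArg₂ _ (hcast x x (by omega) rfl) (hcast y (x + 1) (by omega) h)⟩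
    · exact .inl (Sym2.eq_swap.trans (congrArg₂ _ (Fin.ext h0) (Fin.ext hn)))
  · rintro (h | ⟨e, he, h⟩) <;> rw [Sym2.eq_iff] at h <;>
      rcases h with ⟨rfl, rfl⟩ | ⟨rfl, rfl⟩
    · simp
    · simp
    all_goals simp only [hval e (by omega), hval (e + 1) he, true_or, or_true]

theorem isThetaGraph_cycleGraph_last {n : ℕ} (hn : 1 ≤ n) :
    IsThetaGraph (cycleGraph (n + 1)) 0 (Fin.last n) (fun _ : Unit => n)
      fun _ e => (e : Fin (n + 1)) where
  zero _ := Nat.cast_zero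
  last _ := Fin.natCast_eq_last n
  injOn _ e he f hf h := by
    simpa [Fin.val_cast_of_lt (Nat.lt_succ_of_le he), Fin.val_cast_of_lt (Nat.lt_succ_of_le hf)]
      using congrArg Fin.val h
  endpoints_of_eq i j hij := absurd (Subsingleton.elim i j) hij
  cover x := ⟨(), x, Nat.le_of_lt_succ x.2, Fin.cast_val_eq_self x⟩
  adj_iff x y := by simp [cycleGraph_adj_iff_sym2 hn]

def cycleGraph.addRightIso (n : ℕ) (c : Fin (n + 1)) :
    cycleGraph (n + 1) ≃g cycleGraph (n + 1) where
  toEquiv := Equiv.addRight c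
  map_rel_iff' := by simp [cycleGraph_adj']

def cycleGraph.subLeftIso (n : ℕ) (c : Fin (n + 1)) :
    cycleGraph (n + 1) ≃g cycleGraph (n + 1) where
  toEquiv := Equiv.subLeft c
  map_rel_iff' := by simp [cycleGraph_adj', or_comm]

theorem exists_isThetaGraph_cycleGraph {n : ℕ} {u₀ u₁ : Fin (n + 1)}
    (h : (cycleGraph (n + 1)).Adj u₀ u₁) :
    ∃ w : Unit → ℕ → Fin (n + 1), IsThetaGraph (cycleGraph (n + 1)) u₀ u₁ (fun _ => n) w := by
  have hn : 1 ≤ n := by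
    rcases n with _ | n
    · exact absurd h cycleGraph_one_adj
    · omega
  have S := isThetaGraph_cycleGraph_last hn
  have hlast : Fin.last n = -1 := eq_neg_of_add_eq_zero_left (Fin.last_add_one n)
  have hone : ((1 : Fin (n + 1)) : ℕ) = 1 := by
    simp [Nat.mod_eq_of_lt (show 1 < n + 1 by omega)]
  rcases cycleGraph_adj'.1 h with h | h
  · have h : u₀ - u₁ = 1 := Fin.ext (h.trans hone.symm)
    have e₀ : cycleGraph.addRightIso n u₀ 0 = u₀ := zero_add u₀
    have e₁ : cycleGraph.addRightIso n u₀ (Fin.last n) = u₁ := by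
      change Fin.last n + u₀ = u₁
      rw [hlast, ← h]
      abel
    exact ⟨_, e₀ ▸ e₁ ▸ S.map _⟩
  · have h : u₁ - u₀ = 1 := Fin.ext (h.trans hone.symm)
    have e₀ : cycleGraph.subLeftIso n u₀ 0 = u₀ := sub_zero u₀
    have e₁ : cycleGraph.subLeftIso n u₀ (Fin.last n) = u₁ := by
      change u₀ - Fin.last n = u₁
      rw [hlast, ← h]
      abel
    exact ⟨_, e₀ ▸ e₁ ▸ S.map _⟩

end Cycle

section Gluing

variable {n : ℕ} {V : Fin n → Type} {W : Type} {Gs : ∀ i, SimpleGraph (V i)}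
  {uv : ∀ i, Fin 2 → V i} {G : SimpleGraph W} {φ : ∀ i, V i → W}

namespace IsCliqueGluing

variable (h : IsCliqueGluing Gs uv G φ)
include h

theorem apply_zero_ne_apply_one (i : Fin n) : φ i (uv i 0) ≠ φ i (uv i 1) :=
  (h.phi_inj i).ne ((h.u_inj i).ne (by decide))

theorem eq_or_eq_of_apply_eq {i j : Fin n} (hij : i ≠ j) {x : V i} {y : V j}
    (hxy : φ i x = φ j y) : x = uv i 0 ∨ x = uv i 1 :=
  Fin.exists_fin_two.1 (h.inter i j x y hij hxy)

theorem isThetaGraph {J : Fin n → Type*} {t : ∀ i, J i → ℕ} {w : ∀ i, J i → ℕ → V i}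
    (S : ∀ i, IsThetaGraph (Gs i) (uv i 0) (uv i 1) (t i) (w i)) (i₀ : Fin n) :
    IsThetaGraph G (φ i₀ (uv i₀ 0)) (φ i₀ (uv i₀ 1)) (fun p : Σ i, J i => t p.1 p.2)
      fun p e => φ p.1 (w p.1 p.2 e) where
  zero p := by rw [(S p.1).zero, h.glue]
  last p := by rw [(S p.1).last, h.glue]
  injOn p := (h.phi_inj p.1).comp_injOn ((S p.1).injOn p.2)
  endpoints_of_eq := by
    rintro ⟨i, j⟩ ⟨i', j'⟩ hne e he f hf heq
    dsimp only at he hf heq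
    by_cases hii : i = i'
    · subst hii
      have hjj : j ≠ j' := by rintro rfl; exact hne rfl
      exact (S i).endpoints_of_eq j j' hjj e he f hf (h.phi_inj i heq)
    have hUV := h.apply_zero_ne_apply_one i
    rcases h.eq_or_eq_of_apply_eq hii heq with hx | hx <;>
      rcases h.eq_or_eq_of_apply_eq (Ne.symm hii) heq.symm with hy | hy
    · exact .inl ⟨(S i).eq_zero_of_apply_eq he hx, (S i').eq_zero_of_apply_eq hf hy⟩
    · exact absurd (by rw [← hx, heq, hy, h.glue i' i]) hUV
    · exact absurd (by rw [h.glue i i' 0, ← hy, ← heq, hx]) hUV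
    · exact .inr ⟨(S i).eq_last_of_apply_eq he hx, (S i').eq_last_of_apply_eq hf hy⟩
  cover x := by
    obtain ⟨i, y, rfl⟩ := h.covers x
    obtain ⟨j, e, he, rfl⟩ := (S i).cover y
    exact ⟨⟨i, j⟩, e, he, rfl⟩
  adj_iff x y := by
    refine ⟨fun hadj => ?_, ?_⟩
    · obtain ⟨i, x, rfl⟩ := h.covers x
      obtain ⟨i', y, rfl⟩ := h.covers y
      by_cases hii : i = i'
      · subst hii
        rcases ((S i).adj_iff x y).1 ((h.embed i x y).1 hadj) with hxy | ⟨j, e, he, hxy⟩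
        · left
          rw [← h.glue i i₀ 0, ← h.glue i i₀ 1]
          simpa using congrArg (Sym2.map (φ i)) hxy
        · exact .inr ⟨⟨i, j⟩, e, he, by simpa using congrArg (Sym2.map (φ i)) hxy⟩
      · left
        obtain ⟨⟨q, rfl⟩, ⟨q', rfl⟩⟩ := h.no_extra i i' x y hii hadj
        rw [h.glue i i₀ q, h.glue i' i₀ q'] at hadj ⊢
        fin_cases q <;> fin_cases q'
        · exact absurd hadj (G.irrefl)
        · rfl
        · exact Sym2.eq_swap
        · exact absurd hadj (G.irrefl)
    · rintro (hxy | ⟨p, e, he, hxy⟩) <;> rw [← mem_edgeSet, hxy, mem_edgeSet]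
      exacts [(h.embed i₀ _ _).2 (S i₀).adj, (h.embed p.1 _ _).2 ((S p.1).adj_succ he)]

end IsCliqueGluing

end Gluing

theorem PDP_oddCycle_edgeGluing_general {n m : ℕ} (hn : 2 ≤ n) (hm : 2 ≤ m)
    (k : Fin n → ℕ)
    {W : Type}
    (uv : ∀ i : Fin n, Fin 2 → Fin (2 * k i + 1))
    (hedge : ∀ i, (SimpleGraph.cycleGraph (2 * k i + 1)).Adj (uv i 0) (uv i 1))
    (G : SimpleGraph W) (φ : ∀ i : Fin n, Fin (2 * k i + 1) → W)
    (h : IsCliqueGluing (fun i => SimpleGraph.cycleGraph (2 * k i + 1)) uv G φ) :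
    PDP G m * (m * (m - 1)) ^ (n - 1) =
      ∏ i : Fin n, PDP (SimpleGraph.cycleGraph (2 * k i + 1)) m := by
  choose w hw using fun i => exists_isThetaGraph_cycleGraph (hedge i)
  rw [(h.isThetaGraph hw ⟨0, by omega⟩).PDP_eq hm (κ := fun p : Σ _ : Fin n, Unit => k p.1),
    prod_congr rfl fun i _ => (hw i).PDP_eq hm (κ := fun _ => k i)]
  simp only [Fintype.prod_sigma, Fintype.prod_unique]
  rw [prod_mul_distrib, prod_const, card_univ, Fintype.card_fin,
    ← pow_sub_one_mul (by omega : n ≠ 0)]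
  ring

theorem PDP_oddCycle_edgeGluing {n m : ℕ} (hn : 2 ≤ n) (hm : 2 ≤ m)
    (k : Fin n → ℕ) (hk : ∀ i, 1 ≤ k i)
    {W : Type} [Fintype W]
    (uv : ∀ i : Fin n, Fin 2 → Fin (2 * k i + 1))
    (hedge : ∀ i, (SimpleGraph.cycleGraph (2 * k i + 1)).Adj (uv i 0) (uv i 1))
    (G : SimpleGraph W) (φ : ∀ i : Fin n, Fin (2 * k i + 1) → W)
    (h : IsCliqueGluing (fun i => SimpleGraph.cycleGraph (2 * k i + 1)) uv G φ) :
    PDP G m * (m * (m - 1)) ^ (n - 1) =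
      ∏ i : Fin n, PDP (SimpleGraph.cycleGraph (2 * k i + 1)) m :=
  PDP_oddCycle_edgeGluing_general hn hm k uv hedge G φ h
end

section
/- Let G_0 = K_1 ∨ Θ(2,2,2) (the cone over the Theta graph with three internally disjoint paths of length two between a pair of endpoints). Then P(G_0,4) = 120 and P_DP(G_0,4) ≤ 104; in particular P_DP(G_0,4) < P(G_0,4). -/
/-!
Colouring the apex first shows `P(G0, 4) = 4 · P(K_{2,3}, 3) = 4 · 30`. For the upper bound,
take the cover whose matchings are all identities except for a cyclic shift `a ↦ a + 1` on the
single edge `v₂u₃`; its `H`-colourings can be enumerated, and there are only 104 of them.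
-/

open SimpleGraph

/-- `G0 = K_1 ∨ Θ(2,2,2)`: the cone over `K_{2,3}` (with `none` the universal vertex,
`some (Sum.inl a)` the degree-3 vertices `v₁, v₂` of the Theta graph, and
`some (Sum.inr b)` the degree-2 vertices `u₁, u₂, u₃`). -/
def G0 : SimpleGraph (Option (Fin 2 ⊕ Fin 3)) :=
  SimpleGraph.fromRel (fun x y => x = none ∨
    ∃ a b, x = some (Sum.inl a) ∧ y = some (Sum.inr b))

namespace DPCover

variable {V : Type} {G : SimpleGraph V} {m : ℕ}

def ofPerm (σ : V → V → Equiv.Perm (Fin m)) (hσ : ∀ u v, G.Adj u v → σ v u = (σ u v)⁻¹) :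
    DPCover G m where
  H :=
    { Adj := fun p q => (p.1 = q.1 ∧ p.2 ≠ q.2) ∨ (G.Adj p.1 q.1 ∧ q.2 = σ p.1 q.1 p.2)
      symm := ⟨by
        rintro ⟨u, a⟩ ⟨v, b⟩ (⟨huv, hab⟩ | ⟨huv, hb⟩)
        · exact Or.inl ⟨huv.symm, hab.symm⟩
        · dsimp only at huv hb ⊢
          exact Or.inr ⟨huv.symm, by
            rw [hσ u v huv]; exact (Equiv.Perm.inv_eq_iff_eq.mpr hb).symm⟩⟩
      loopless := ⟨by rintro ⟨u, a⟩ (⟨-, h⟩ | ⟨h, -⟩) <;> simp_all⟩ }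
  part_complete _ _ _ hab := Or.inl ⟨rfl, hab⟩
  cross := by
    rintro u v a b huv (⟨h, -⟩ | ⟨h, -⟩)
    exacts [absurd h huv, h]
  matching_right := by
    rintro u v a b b' huv (⟨h, -⟩ | ⟨-, hb⟩) (⟨h', -⟩ | ⟨-, hb'⟩)
    all_goals first | exact absurd ‹_› huv | exact hb.trans hb'.symm
  matching_left := by
    rintro u v a a' b huv (⟨h, -⟩ | ⟨-, hb⟩) (⟨h', -⟩ | ⟨-, hb'⟩)
    all_goals first | exact absurd ‹_› huv | exact (σ u v).injective (hb.symm.trans hb')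

instance [DecidableEq V] [DecidableRel G.Adj] (σ : V → V → Equiv.Perm (Fin m))
    (hσ : ∀ u v, G.Adj u v → σ v u = (σ u v)⁻¹) : DecidableRel (ofPerm σ hσ).H.Adj :=
  fun p q => inferInstanceAs (Decidable ((p.1 = q.1 ∧ p.2 ≠ q.2) ∨ _))

instance [Fintype V] (C : DPCover G m) [DecidableRel C.H.Adj] : DecidablePred C.IsColoring :=
  fun c => inferInstanceAs (Decidable (∀ u v, ¬ C.H.Adj (u, c u) (v, c v)))

end DPCover

theorem PDP_le_dpCount {V : Type} {G : SimpleGraph V} {m : ℕ} (C : DPCover G m) :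
    PDP G m ≤ dpCount C :=
  Nat.sInf_le ⟨C, rfl⟩

namespace G0

instance : DecidableRel G0.Adj := fun x y => by
  rw [G0, SimpleGraph.fromRel_adj]; infer_instance

set_option maxRecDepth 100000 in
theorem properCount_eq : properCount G0 4 = 120 := by
  rw [properCount, Nat.card_eq_fintype_card]
  decide +kernel

/-- Shift by one on the edge `v₂u₃` (oriented from `v₂`), zero on every other edge. -/
def twist : Option (Fin 2 ⊕ Fin 3) → Option (Fin 2 ⊕ Fin 3) → Fin 4
  | some (.inl 1), some (.inr 2) => 1
  | some (.inr 2), some (.inl 1) => -1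
  | _, _ => 0

theorem twist_swap (u v : Option (Fin 2 ⊕ Fin 3)) : twist v u = -twist u v := by
  revert u v; decide

abbrev twistedCover : DPCover G0 4 :=
  DPCover.ofPerm (fun u v => Equiv.addRight (twist u v)) fun u v _ => by
    rw [twist_swap, Equiv.Perm.inv_def, Equiv.addRight_symm]

set_option maxRecDepth 100000 in
theorem dpCount_twistedCover : dpCount twistedCover = 104 := by
  rw [dpCount, Nat.card_eq_fintype_card]
  decide +kernel

end G0

theorem PDP_G0_counterexample :
    properCount G0 4 = 120 ∧ PDP G0 4 ≤ 104 ∧ PDP G0 4 < properCount G0 4 := by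
  have hPDP : PDP G0 4 ≤ 104 := G0.dpCount_twistedCover ▸ PDP_le_dpCount _
  exact ⟨G0.properCount_eq, hPDP, by rw [G0.properCount_eq]; omega⟩
end

section
/- With the notation of the F-amalgamated cover of a K_p-gluing: let G_1,…,G_n be vertex-disjoint graphs with cliques {u_{i,1},…,u_{i,p}}, H_i an m-fold cover of G_i conducive to its clique, F = (f_2,…,f_n) permutations of [m], γ_1 the identity and γ_i(j_1,…,j_p) = (f_i(j_1),…,f_i(j_p)), and H the F-amalgamated m-fold cover of the gluing G. Then the number of H-colorings of G equals Σ_{j ∈ [m]^p} N(P_{1,j},H_1) ∏_{i=2}^n N(P_{i,γ_i(j)},H_i), where P_{i,j} = {(u_{i,q}, j_q) : q ∈ [p]}. -/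
open SimpleGraph

/-- A cover is conducive to a clique `k : Fin p → V` if it is full and the induced
subcover on the clique admits a canonical labeling. -/
def DPCover.Conducive {V : Type} {G : SimpleGraph V} {m p : ℕ} (C : DPCover G m)
    (k : Fin p → V) : Prop :=
  C.IsFull ∧ ∃ σ : Fin p → Equiv.Perm (Fin m),
    ∀ q q' : Fin p, q ≠ q' → ∀ j : Fin m, C.H.Adj (k q, σ q j) (k q', σ q' j)

/-- The `K`-canonical DP color function: the minimum number of colorings over all
`m`-fold covers conducive to the clique `k`. -/
noncomputable def PDPK {V : Type} (G : SimpleGraph V) {p : ℕ} (k : Fin p → V) (m : ℕ) : ℕ :=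
  sInf {n : ℕ | ∃ C : DPCover G m, C.Conducive k ∧ dpCount C = n}

open Classical in
/-- Auxiliary: assemble a coloring of the glued graph from a tuple index `j` and
colorings `d i` of the pieces. -/
noncomputable def AmalgBack {n p m : ℕ} {V : Fin n → Type} {W : Type}
    (u : ∀ i, Fin p → V i) (φ : ∀ i, V i → W)
    (hcov : ∀ w : W, ∃ i x, φ i x = w) (i0 : Fin n)
    (j : Fin p → Fin m) (d : ∀ i, V i → Fin m) : W → Fin m := fun w =>
  if h : ∃ q, φ i0 (u i0 q) = w then j h.choose
  else d (hcov w).choose (hcov w).choose_spec.choose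

theorem AmalgBack_clique {n p m : ℕ} {V : Fin n → Type} {W : Type}
    (u : ∀ i, Fin p → V i) (φ : ∀ i, V i → W)
    (hcov : ∀ w : W, ∃ i x, φ i x = w) (i0 : Fin n)
    (j : Fin p → Fin m) (d : ∀ i, V i → Fin m)
    (phi_inj : ∀ i, Function.Injective (φ i))
    (u_inj : ∀ i, Function.Injective (u i))
    (hg : ∀ i i' q, φ i (u i q) = φ i' (u i' q))
    (i : Fin n) (q : Fin p) :
    AmalgBack u φ hcov i0 j d (φ i (u i q)) = j q := by
  classical
  have h : ∃ q', φ i0 (u i0 q') = φ i (u i q) := ⟨q, hg i0 i q⟩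
  rw [AmalgBack, dif_pos h]
  congr 1
  have hs : φ i0 (u i0 h.choose) = φ i0 (u i0 q) := h.choose_spec.trans (hg i0 i q).symm
  exact u_inj i0 (phi_inj i0 hs)

theorem AmalgBack_inner {n p m : ℕ} {V : Fin n → Type} {W : Type}
    (u : ∀ i, Fin p → V i) (φ : ∀ i, V i → W)
    (hcov : ∀ w : W, ∃ i x, φ i x = w) (i0 : Fin n)
    (j : Fin p → Fin m) (d : ∀ i, V i → Fin m)
    (phi_inj : ∀ i, Function.Injective (φ i))
    (hg : ∀ i i' q, φ i (u i q) = φ i' (u i' q))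
    (hinter : ∀ i i' x y, i ≠ i' → φ i x = φ i' y → ∃ q, x = u i q)
    (i : Fin n) (x : V i) (hx : ∀ q, x ≠ u i q) :
    AmalgBack u φ hcov i0 j d (φ i x) = d i x := by
  have h : ¬∃ q, φ i0 (u i0 q) = φ i x := by
    rintro ⟨q, hq⟩
    by_cases hii : i = i0
    · subst hii
      exact hx q (phi_inj i hq.symm)
    · obtain ⟨q', hq'⟩ := hinter i i0 x (u i0 q) hii hq.symm
      exact hx q' hq'
  rw [AmalgBack, dif_neg h]
  have key : ∀ (i1 : Fin n) (x1 : V i1), φ i1 x1 = φ i x → d i1 x1 = d i x := by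
    intro i1 x1 hs
    rcases eq_or_ne i1 i with rfl | hii
    · rw [phi_inj i1 hs]
    · obtain ⟨q, hq⟩ := hinter i1 i x1 x hii hs
      exfalso
      rw [hq, hg i1 i q] at hs
      exact hx q (phi_inj i hs).symm
  exact key _ _ (hcov (φ i x)).choose_spec.choose_spec

theorem dpCount_amalgamated_clique {n p m : ℕ} (hn : 2 ≤ n)
    {V : Fin n → Type} [∀ i, Fintype (V i)] {W : Type} [Fintype W]
    {Gs : ∀ i, SimpleGraph (V i)} {u : ∀ i, Fin p → V i}
    {G : SimpleGraph W} {φ : ∀ i, V i → W}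
    (hglue : IsCliqueGluing Gs u G φ)
    (C : ∀ i, DPCover (Gs i) m)
    (hfull : ∀ i, (C i).IsFull)
    -- each cover is conducive, with the canonical labeling on the clique in place:
    (hcan : ∀ i (q q' : Fin p), q ≠ q' → ∀ j : Fin m, (C i).H.Adj (u i q, j) (u i q', j))
    (f : Fin n → Equiv.Perm (Fin m)) (hf0 : f ⟨0, by omega⟩ = 1)
    (D : DPCover G m)
    -- `D` is the `F`-amalgamated cover of `G` obtained from the `C i`:
    (hinner : ∀ i (x y : V i), (∀ q, x ≠ u i q) → (∀ q, y ≠ u i q) → ∀ r s : Fin m,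
      (D.H.Adj (φ i x, r) (φ i y, s) ↔ (C i).H.Adj (x, r) (y, s)))
    (hglued : ∀ i (x : V i), (∀ q, x ≠ u i q) → ∀ (q : Fin p) (r j : Fin m),
      (D.H.Adj (φ i x, r) (φ i (u i q), j) ↔ (C i).H.Adj (x, r) (u i q, f i j)))
    (hcliq : ∀ i i' (q q' : Fin p) (j j' : Fin m),
      D.H.Adj (φ i (u i q), j) (φ i' (u i' q'), j') ↔
        ((q ≠ q' ∧ j = j') ∨ (q = q' ∧ j ≠ j'))) :
    dpCount D = ∑ j : Fin p → Fin m, ∏ i : Fin n,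
      NCount (C i) (Set.range fun q : Fin p => (u i q, f i (j q))) := by
  classical
  set i0 : Fin n := ⟨0, by omega⟩ with hi0
  let T : (Fin p → Fin m) → Type := fun j => ∀ i : Fin n,
    {c : V i → Fin m // (C i).IsColoring c ∧
      ∀ pr ∈ Set.range (fun q : Fin p => (u i q, f i (j q))), c pr.1 = pr.2}
  -- pin condition in usable form
  have hpin : ∀ (j : Fin p → Fin m) (i : Fin n) (c : V i → Fin m),
      (∀ pr ∈ Set.range (fun q : Fin p => (u i q, f i (j q))), c pr.1 = pr.2) ↔
      ∀ q, c (u i q) = f i (j q) := by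
    intro j i c
    constructor
    · intro h q
      exact h _ ⟨q, rfl⟩
    · rintro h pr ⟨q, rfl⟩
      exact h q
  -- j is injective whenever the pinned colorings exist
  have hjinj : ∀ (j : Fin p → Fin m), T j → ∀ q q', j q = j q' → q = q' := by
    intro j d q q' hqq
    by_contra hne
    have hp := (hpin j i0 (d i0).1).1 (d i0).2.2
    refine (d i0).2.1 (u i0 q) (u i0 q') ?_
    rw [hp q, hp q', hqq]
    exact hcan i0 q q' hne (f i0 (j q'))
  -- the assembled function is a coloring of D
  have B1 : ∀ (j : Fin p → Fin m) (d : ∀ i, V i → Fin m) (i : Fin n) (q : Fin p),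
      AmalgBack u φ hglue.covers i0 j d (φ i (u i q)) = j q := fun j d i q =>
    AmalgBack_clique u φ hglue.covers i0 j d hglue.phi_inj hglue.u_inj hglue.glue i q
  have B2 : ∀ (j : Fin p → Fin m) (d : ∀ i, V i → Fin m) (i : Fin n) (x : V i),
      (∀ q, x ≠ u i q) → AmalgBack u φ hglue.covers i0 j d (φ i x) = d i x := fun j d i x hx =>
    AmalgBack_inner u φ hglue.covers i0 j d hglue.phi_inj hglue.glue hglue.inter i x hx
  have hcol : ∀ (j : Fin p → Fin m) (d : T j),
      D.IsColoring (AmalgBack u φ hglue.covers i0 j fun i => (d i).1) := by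
    intro j d w w' hadj
    obtain ⟨i, x, rfl⟩ := hglue.covers w
    obtain ⟨i', y, rfl⟩ := hglue.covers w'
    by_cases hx : ∃ q, x = u i q
    · obtain ⟨q, rfl⟩ := hx
      by_cases hy : ∃ q', y = u i' q'
      · obtain ⟨q', rfl⟩ := hy
        rw [B1 j _ i q,
          B1 j _ i' q'] at hadj
        rcases (hcliq i i' q q' (j q) (j q')).1 hadj with ⟨hne, hje⟩ | ⟨heq, hjne⟩
        · exact hne (hjinj j d q q' hje)
        · exact hjne (by rw [heq])
      · push_neg at hy
        have hii : i' = i := by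
          by_contra hne
          by_cases hw : φ i (u i q) = φ i' y
          · obtain ⟨q', hq'⟩ := hglue.inter i' i y (u i q) hne hw.symm
            exact hy q' hq'
          · obtain ⟨q', hq'⟩ := (hglue.no_extra i i' (u i q) y (fun h => hne h.symm)
              (D.cross _ _ _ _ hw hadj)).2
            exact hy q' hq'
        subst i'
        rw [B1 j _ i q,
          B2 j _ i y hy] at hadj
        refine (d i).2.1 y (u i q) ?_
        rw [(hpin j i (d i).1).1 (d i).2.2 q]
        exact (hglued i y hy q ((d i).1 y) (j q)).1 hadj.symm
    · push_neg at hx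
      by_cases hy : ∃ q', y = u i' q'
      · obtain ⟨q', rfl⟩ := hy
        have hii : i' = i := by
          by_contra hne
          by_cases hw : φ i x = φ i' (u i' q')
          · obtain ⟨q0, hq0⟩ := hglue.inter i i' x (u i' q') (fun h => hne h.symm) hw
            exact hx q0 hq0
          · obtain ⟨q0, hq0⟩ := (hglue.no_extra i i' x (u i' q') (fun h => hne h.symm)
              (D.cross _ _ _ _ hw hadj)).1
            exact hx q0 hq0
        subst i'
        rw [B2 j _ i x hx,
          B1 j _ i q'] at hadj
        refine (d i).2.1 x (u i q') ?_
        rw [(hpin j i (d i).1).1 (d i).2.2 q']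
        exact (hglued i x hx q' ((d i).1 x) (j q')).1 hadj
      · push_neg at hy
        have hii : i' = i := by
          by_contra hne
          by_cases hw : φ i x = φ i' y
          · obtain ⟨q0, hq0⟩ := hglue.inter i i' x y (fun h => hne h.symm) hw
            exact hx q0 hq0
          · obtain ⟨q0, hq0⟩ := (hglue.no_extra i i' x y (fun h => hne h.symm)
              (D.cross _ _ _ _ hw hadj)).1
            exact hx q0 hq0
        subst i'
        rw [B2 j _ i x hx,
          B2 j _ i y hy] at hadj
        exact (d i).2.1 x y ((hinner i x y hx hy _ _).1 hadj)
  let B : (Σ j : Fin p → Fin m, T j) → {c : W → Fin m // D.IsColoring c} :=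
    fun s => ⟨AmalgBack u φ hglue.covers i0 s.1 (fun i => (s.2 i).1), hcol s.1 s.2⟩
  have hBinj : Function.Injective B := by
    rintro ⟨j, d⟩ ⟨j', d'⟩ h
    have hc : AmalgBack u φ hglue.covers i0 j (fun i => (d i).1)
        = AmalgBack u φ hglue.covers i0 j' (fun i => (d' i).1) :=
      congrArg Subtype.val h
    have hj : j = j' := by
      funext q
      have hq := congrFun hc (φ i0 (u i0 q))
      rwa [B1 j _ i0 q,
        B1 j' _ i0 q] at hq
    subst hj
    suffices hd : d = d' by rw [hd]
    funext i
    refine Subtype.ext (funext fun x => ?_)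
    by_cases hx : ∃ q, x = u i q
    · obtain ⟨q, rfl⟩ := hx
      rw [(hpin j i (d i).1).1 (d i).2.2 q, (hpin j i (d' i).1).1 (d' i).2.2 q]
    · push_neg at hx
      have hq := congrFun hc (φ i x)
      rwa [B2 j _ i x hx,
        B2 j _ i x hx] at hq
  have hBsurj : Function.Surjective B := by
    rintro ⟨c, hc⟩
    obtain ⟨d, hdpos, hdneg⟩ : ∃ d : ∀ i, V i → Fin m,
        (∀ i q, d i (u i q) = f i (c (φ i (u i q)))) ∧
        (∀ i x, (∀ q, x ≠ u i q) → d i x = c (φ i x)) := by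
      refine ⟨fun i x => if h : ∃ q, x = u i q then f i (c (φ i x)) else c (φ i x), ?_, ?_⟩
      · intro i q
        exact dif_pos ⟨q, rfl⟩
      · intro i x hx
        exact dif_neg (by push_neg; exact hx)
    have hcol' : ∀ i, (C i).IsColoring (d i) := by
      intro i x y hadj
      by_cases hx : ∃ q, x = u i q
      · obtain ⟨q, rfl⟩ := hx
        by_cases hy : ∃ q', y = u i q'
        · obtain ⟨q', rfl⟩ := hy
          rcases eq_or_ne q q' with rfl | hne
          · exact hadj.ne rfl
          · rw [hdpos i q, hdpos i q'] at hadj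
            have hab : c (φ i (u i q)) ≠ c (φ i (u i q')) := by
              intro hcc
              exact hc _ _ ((hcliq i i q q' _ _).2 (Or.inl ⟨hne, hcc⟩))
            have huu : u i q ≠ u i q' := fun h => hne (hglue.u_inj i h)
            have := (C i).matching_right (u i q) (u i q') (f i (c (φ i (u i q))))
              (f i (c (φ i (u i q)))) (f i (c (φ i (u i q')))) huu
              (hcan i q q' hne (f i (c (φ i (u i q))))) hadj
            exact hab ((f i).injective this)
        · push_neg at hy
          rw [hdpos i q, hdneg i y hy] at hadj
          exact hc _ _ ((hglued i y hy q (c (φ i y)) (c (φ i (u i q)))).2 hadj.symm).symm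
      · push_neg at hx
        by_cases hy : ∃ q', y = u i q'
        · obtain ⟨q', rfl⟩ := hy
          rw [hdneg i x hx, hdpos i q'] at hadj
          exact hc _ _ ((hglued i x hx q' (c (φ i x)) (c (φ i (u i q')))).2 hadj)
        · push_neg at hy
          rw [hdneg i x hx, hdneg i y hy] at hadj
          exact hc _ _ ((hinner i x y hx hy _ _).2 hadj)
    refine ⟨⟨fun q => c (φ i0 (u i0 q)), fun i => ⟨d i, hcol' i, (hpin _ i (d i)).2 ?_⟩⟩, ?_⟩
    · intro q
      rw [hdpos i q, hglue.glue i i0 q]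
    · apply Subtype.ext
      funext w
      obtain ⟨i, x, rfl⟩ := hglue.covers w
      show AmalgBack u φ hglue.covers i0 _ _ (φ i x) = c (φ i x)
      by_cases hx : ∃ q, x = u i q
      · obtain ⟨q, rfl⟩ := hx
        rw [B1 _ _ i q]
        exact congrArg c (hglue.glue i0 i q)
      · push_neg at hx
        rw [B2 _ _ i x hx]
        exact hdneg i x hx
  have hcard : Nat.card (Σ j : Fin p → Fin m, T j) = dpCount D :=
    Nat.card_congr (Equiv.ofBijective B ⟨hBinj, hBsurj⟩)
  rw [← hcard]
  haveI : ∀ j, Fintype (T j) := fun j => Fintype.ofFinite _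
  rw [Nat.card_eq_fintype_card, Fintype.card_sigma]
  refine Finset.sum_congr rfl fun j _ => ?_
  rw [← Nat.card_eq_fintype_card, Nat.card_pi]
  exact Finset.prod_congr rfl fun i _ => rfl
end

section
/- Let T be a finite set of all p-tuples of pairwise distinct elements of [m] (m ≥ p), and let a, b : [m]^p → ℝ≥0 vanish on tuples with a repeated coordinate. For σ ∈ S_m let f_σ act coordinatewise on [m]^p and D_σ = Σ_{j ∈ [m]^p} a(j) b(f_σ(j)). Then there exists σ' ∈ S_m with D_{σ'} ≤ (Σ_j a(j))(Σ_j b(j)) / ∏_{i=0}^{p-1}(m-i). -/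
open SimpleGraph

/-!
Let `S` be the set of injective tuples. `Perm (Fin m)` acts transitively on `S`, so
`∑ σ, b (σ ∘ j)` takes the same value for every `j ∈ S`; double counting over `S × S_m`
identifies it as `m! (∑ b) / |S|`, with `|S| = ∏ (m - i)`. Summing `D_σ` over all `σ` therefore
gives `m! (∑ a) (∑ b) / |S|`, and some `σ` is at most the average.
-/

open Finset MulAction

namespace MulAction

variable {G X M : Type*} [Group G] [Fintype G] [MulAction G X] [AddCommMonoid M]

theorem sum_smul_eq_of_mem_orbit (f : X → M) {x y : X} (hy : y ∈ orbit G x) :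
    ∑ g : G, f (g • y) = ∑ g : G, f (g • x) := by
  obtain ⟨h, rfl⟩ := hy
  exact Fintype.sum_equiv (Equiv.mulRight h) _ _ fun g => by simp [mul_smul]

theorem card_nsmul_sum_smul_eq_of_orbit (f : X → M) {x : X} {S : Finset X}
    (hS : ∀ y, y ∈ S ↔ y ∈ orbit G x) :
    #S • ∑ g : G, f (g • x) = Fintype.card G • ∑ y ∈ S, f y := by
  have hinv (g : G) (y : X) : y ∈ S ↔ g • y ∈ S := by
    rw [hS, hS, ← orbit_eq_iff, ← orbit_eq_iff, orbit_smul]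
  calc #S • ∑ g : G, f (g • x)
      = ∑ y ∈ S, ∑ g : G, f (g • y) := by
        rw [← sum_const]
        exact sum_congr rfl fun y hy => (sum_smul_eq_of_mem_orbit f ((hS y).1 hy)).symm
    _ = ∑ g : G, ∑ y ∈ S, f (g • y) := sum_comm
    _ = ∑ _g : G, ∑ y ∈ S, f y :=
        sum_congr rfl fun g _ => sum_equiv (toPerm g) (hinv g) fun _ _ => rfl
    _ = Fintype.card G • ∑ y ∈ S, f y := by rw [sum_const, card_univ]

end MulAction

theorem Equiv.Perm.mem_orbit_iff_injective {ι α : Type*} [Finite ι] {j k : ι → α}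
    (hj : j.Injective) :
    k ∈ orbit (Equiv.Perm α) j ↔ k.Injective := by
  refine ⟨?_, fun hk => ?_⟩
  · rintro ⟨σ, rfl⟩
    exact σ.injective.comp hj
  · obtain ⟨σ, hσ⟩ := Equiv.Perm.exists_extending_pair j k hj hk
    exact ⟨σ, funext hσ⟩

section InjectiveTuples

variable {ι α : Type*} [Fintype ι] [DecidableEq ι] [Fintype α] [DecidableEq α]

theorem card_filter_injective :
    #{j : ι → α | j.Injective} = (Fintype.card α).descFactorial (Fintype.card ι) := by
  rw [← Fintype.card_subtype, Fintype.card_congr (Equiv.subtypeInjectiveEquivEmbedding ι α),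
    Fintype.card_embedding_eq]

theorem sum_perm_smul_eq_of_injective {K : Type*} [Semifield K] [CharZero K]
    (b : (ι → α) → K) (hb : ∀ k, ¬ k.Injective → b k = 0) {j : ι → α} (hj : j.Injective) :
    ∑ σ : Equiv.Perm α, b (σ • j) =
      Fintype.card (Equiv.Perm α) * (∑ k, b k) /
        (Fintype.card α).descFactorial (Fintype.card ι) := by
  have horbit := card_nsmul_sum_smul_eq_of_orbit b (S := {k : ι → α | k.Injective})
    fun k => by rw [mem_filter_univ, Equiv.Perm.mem_orbit_iff_injective hj]
  have hN : ((Fintype.card α).descFactorial (Fintype.card ι) : K) ≠ 0 := by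
    rw [← card_filter_injective]
    exact_mod_cast card_ne_zero.2 ⟨j, (mem_filter_univ j).2 hj⟩
  rw [sum_filter_of_ne fun k _ hk => not_not.1 (mt (hb k) hk), card_filter_injective,
    nsmul_eq_mul, nsmul_eq_mul] at horbit
  rw [eq_div_iff hN, ← horbit, mul_comm]

end InjectiveTuples

theorem prod_range_natCast_sub_eq_descFactorial {R : Type*} [CommRing R] (m p : ℕ) :
    ∏ i ∈ range p, ((m : R) - i) = m.descFactorial p := by
  rw [← descPochhammer_eval_eq_prod_range, descPochhammer_eval_eq_descFactorial]

theorem exists_perm_avg_le_general_general {m p : ℕ}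
    (a b : (Fin p → Fin m) → ℝ)
    (hza : ∀ j, ¬ Function.Injective j → a j = 0)
    (hzb : ∀ j, ¬ Function.Injective j → b j = 0) :
    ∃ σ : Equiv.Perm (Fin m),
      (∑ j : Fin p → Fin m, a j * b (σ ∘ j)) ≤
        (∑ j : Fin p → Fin m, a j) * (∑ j : Fin p → Fin m, b j) /
          ∏ i ∈ Finset.range p, ((m : ℝ) - i) := by
  rw [prod_range_natCast_sub_eq_descFactorial]
  have hterm (j : Fin p → Fin m) : ∑ σ : Equiv.Perm (Fin m), a j * b (σ ∘ j) =
      a j * (Fintype.card (Equiv.Perm (Fin m)) * (∑ k, b k) / m.descFactorial p) := by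
    rw [← mul_sum]
    by_cases hj : j.Injective
    · have hj_sum := sum_perm_smul_eq_of_injective b hzb hj
      rw [Fintype.card_fin, Fintype.card_fin] at hj_sum
      exact congrArg (a j * ·) hj_sum
    · simp [hza j hj]
  have htotal : ∑ σ : Equiv.Perm (Fin m), ∑ j, a j * b (σ ∘ j) =
      ∑ _σ : Equiv.Perm (Fin m), (∑ j, a j) * (∑ j, b j) / m.descFactorial p := by
    rw [sum_comm, sum_congr rfl fun j _ => hterm j, ← sum_mul, sum_const, card_univ, nsmul_eq_mul]
    ring
  obtain ⟨σ, -, hσ⟩ := exists_le_of_sum_le univ_nonempty htotal.le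
  exact ⟨σ, hσ⟩

theorem exists_perm_avg_le_general {m p : ℕ} (hp : p ≤ m)
    (a b : (Fin p → Fin m) → ℝ)
    (ha : ∀ j, 0 ≤ a j) (hb : ∀ j, 0 ≤ b j)
    (hza : ∀ j, ¬ Function.Injective j → a j = 0)
    (hzb : ∀ j, ¬ Function.Injective j → b j = 0) :
    ∃ σ : Equiv.Perm (Fin m),
      (∑ j : Fin p → Fin m, a j * b (σ ∘ j)) ≤
        (∑ j : Fin p → Fin m, a j) * (∑ j : Fin p → Fin m, b j) /
          ∏ i ∈ Finset.range p, ((m : ℝ) - i) :=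
  exists_perm_avg_le_general_general a b hza hzb
end
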